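/- arXiv:1301.3653 — 9 statements merged into one kernel-verified Lean document; each statement's English description precedes it below -/
import Mathlib

section
/- For all n ≥ 0 and k ≥ 1, the higher-order secant numbers satisfy the three-term recurrence S(n+1, k) = S(n, k−1) + (k+1)^2 · S(n, k+1), with S(n,0) = S_n (the classical secant numbers) for all n ≥ 0. -/
open Real Finset

/-- Tangent numbers: tan t = Σ Tₙ tⁿ/n!. -/
noncomputable def tangentNumber (n : ℕ) : ℝ := iteratedDeriv n Real.tan 0

/-- Secant numbers: sec t = Σ Sₙ tⁿ/n!. -/
noncomputable def secantNumber (n : ℕ) : ℝ := iteratedDeriv n (fun t : ℝ => 1 / Real.cos t) 0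

/-- Higher-order tangent numbers: tanᵏ t / k! = Σ T(n,k) tⁿ/n!. -/
noncomputable def T (n k : ℕ) : ℝ :=
  iteratedDeriv n (fun t : ℝ => Real.tan t ^ k) 0 / (Nat.factorial k : ℝ)

/-- Higher-order secant numbers: sec t · tanᵏ t / k! = Σ S(n,k) tⁿ/n!. -/
noncomputable def S (n k : ℕ) : ℝ :=
  iteratedDeriv n (fun t : ℝ => Real.tan t ^ k / Real.cos t) 0 / (Nat.factorial k : ℝ)

/-- Higher-order arctangent numbers: arctanᵏ t / k! = Σ T*(n,k) tⁿ/n!. -/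
noncomputable def Tstar (n k : ℕ) : ℝ :=
  iteratedDeriv n (fun t : ℝ => Real.arctan t ^ k) 0 / (Nat.factorial k : ℝ)

/-- Binomial coefficient with integer lower index (0 if lower index is negative). -/
noncomputable def chooseZ (a : ℕ) (b : ℤ) : ℝ :=
  if 0 ≤ b then (a.choose b.toNat : ℝ) else 0

/-!
Write `sec t · tanᵏ t` as `tanᵏ t / cos t`. Since `tan' = 1 + tan²` and `sec' = sec · tan`,
`(tanᵏ⁺¹ / cos)' = (k + 1) · tanᵏ / cos + (k + 2) · tanᵏ⁺² / cos` wherever `cos ≠ 0`.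
Differentiating `n` more times at `0` and dividing by `(k + 1)!` gives the recurrence, the factor
`(k + 2)` turning into `(k + 2)²` when `(k + 2)!` is put in place of `(k + 1)!`.
-/

lemma hasDerivAt_tan_pow_succ_div_cos (k : ℕ) {x : ℝ} (hx : cos x ≠ 0) :
    HasDerivAt (fun t => tan t ^ (k + 1) / cos t)
      ((k + 1) * (tan x ^ k / cos x) + (k + 2) * (tan x ^ (k + 2) / cos x)) x := by
  refine (((hasDerivAt_tan hx).pow (k + 1)).div (hasDerivAt_cos x) hx).congr_deriv ?_
  have hsin : sin x = tan x * cos x := (tan_mul_cos hx).symm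
  have hpyth : tan x ^ 2 * cos x ^ 2 + cos x ^ 2 = 1 := by
    rw [← mul_pow, tan_mul_cos hx, sin_sq_add_cos_sq]
  simp only [Pi.pow_apply, Nat.add_sub_cancel, hsin]
  field_simp
  push_cast
  linear_combination -(k + 1) * tan x ^ k * hpyth

lemma deriv_tan_pow_succ_div_cos_eventuallyEq (k : ℕ) {x : ℝ} (hx : cos x ≠ 0) :
    deriv (fun t => tan t ^ (k + 1) / cos t) =ᶠ[nhds x]
      fun t => (k + 1) * (tan t ^ k / cos t) + (k + 2) * (tan t ^ (k + 2) / cos t) := by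
  have hopen : IsOpen {t : ℝ | cos t ≠ 0} := isOpen_ne_fun continuous_cos continuous_const
  filter_upwards [hopen.mem_nhds hx] with t ht
  exact (hasDerivAt_tan_pow_succ_div_cos k ht).deriv

lemma contDiffAt_tan_pow_div_cos (n k : ℕ) {x : ℝ} (hx : cos x ≠ 0) :
    ContDiffAt ℝ n (fun t => tan t ^ k / cos t) x :=
  ((contDiffAt_tan.2 hx).pow k).div contDiff_cos.contDiffAt hx

lemma iteratedDeriv_succ_tan_pow_succ_div_cos (n k : ℕ) {x : ℝ} (hx : cos x ≠ 0) :
    iteratedDeriv (n + 1) (fun t => tan t ^ (k + 1) / cos t) x =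
      (k + 1) * iteratedDeriv n (fun t => tan t ^ k / cos t) x +
        (k + 2) * iteratedDeriv n (fun t => tan t ^ (k + 2) / cos t) x := by
  rw [iteratedDeriv_succ', (deriv_tan_pow_succ_div_cos_eventuallyEq k hx).iteratedDeriv_eq n,
    iteratedDeriv_fun_add (contDiffAt_const.mul (contDiffAt_tan_pow_div_cos n k hx))
      (contDiffAt_const.mul (contDiffAt_tan_pow_div_cos n (k + 2) hx)),
    iteratedDeriv_const_mul_field, iteratedDeriv_const_mul_field]

theorem stmt9 :
    (∀ n k : ℕ, 1 ≤ k →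
      S (n + 1) k = S n (k - 1) + ((k : ℝ) + 1) ^ 2 * S n (k + 1)) ∧
    (∀ n : ℕ, S n 0 = secantNumber n) := by
  refine ⟨fun n k hk => ?_, fun n => by simp [S, secantNumber]⟩
  obtain ⟨k, rfl⟩ := Nat.exists_eq_add_of_le' hk
  simp only [S, Nat.add_sub_cancel, add_assoc, Nat.reduceAdd,
    iteratedDeriv_succ_tan_pow_succ_div_cos n k (x := 0) (by simp), Nat.factorial_succ]
  push_cast
  field_simp
  ring
end

section
/- For every n ≥ 1, Σ_{k=1}^{n+1} (k−1)! · T(n+1, k) equals (2^n − 1) · T_n if n is odd and 2^n · S_n if n is even, where T_n and S_n are the tangent and secant numbers. -/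
open Real Finset

/-!
Summing `(k - 1)! T(n + 1, k) = (d/dt)^(n+1) (tan^k t / k) |₀` over `k ≤ n + 1` gives the
`(n + 1)`-st derivative at `0` of the truncated series `G = ∑_{k ≤ n+1} tan^k / k` of
`-log (1 - tan t)`. By the geometric sum, `G' = sec² t (1 - tan^(n+1) t) / (1 - tan t)`, and
`sec² t / (1 - tan t) = (1 + tan t) / (1 - tan t) - tan t = sec 2t + tan 2t - tan t`.
The term `tan^(n+1) t · (…)` vanishes to order `n + 1` at `0`, so the `n`-th derivative of `G'`
at `0` is `2ⁿ Sₙ + 2ⁿ Tₙ - Tₙ`; since `sec` is even and `tan` is odd, one of `Sₙ`, `Tₙ` is zero.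
-/

open Filter Topology
open scoped ContDiff

section IteratedDeriv

variable {𝕜 : Type*} [NontriviallyNormedField 𝕜]

section Scaling

variable {F : Type*} [NormedAddCommGroup F] [NormedSpace 𝕜 F]

theorem ContDiffAt.comp_const_mul {f : 𝕜 → F} {n : WithTop ℕ∞} {c x : 𝕜}
    (hf : ContDiffAt 𝕜 n f (c * x)) : ContDiffAt 𝕜 n (fun y => f (c * y)) x :=
  hf.comp (g := f) x (contDiffAt_const.mul contDiffAt_id)

-- A local version of `iteratedDeriv_comp_const_mul`, which needs `f` smooth on all of `𝕜`
-- (false for `tan` and `sec`).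
theorem iteratedDeriv_comp_const_mul_of_contDiffAt {f : 𝕜 → F} {n : ℕ} {c x : 𝕜}
    (hf : ContDiffAt 𝕜 n f (c * x)) :
    iteratedDeriv n (fun y => f (c * y)) x = c ^ n • iteratedDeriv n f (c * x) := by
  obtain ⟨u, hu, hfu⟩ := hf.contDiffOn le_rfl (by simp)
  obtain ⟨v, hvu, hv, hcx⟩ := mem_nhds_iff.mp hu
  let g : 𝕜 →L[𝕜] 𝕜 := c • ContinuousLinearMap.id 𝕜 𝕜
  have hgv : IsOpen (g ⁻¹' v) := hv.preimage g.continuous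
  have hx : x ∈ g ⁻¹' v := by simpa [g] using hcx
  have hcomp := g.iteratedFDerivWithin_comp_right (hfu.mono hvu) hv.uniqueDiffOn
    hgv.uniqueDiffOn hx le_rfl
  rw [iteratedFDerivWithin_of_isOpen n hgv hx, iteratedFDerivWithin_of_isOpen n hv hx] at hcomp
  have hc : (fun _ : Fin n => c) = fun _ => c • (1 : 𝕜) := by simp
  simp only [iteratedDeriv_eq_iteratedFDeriv]
  simpa [g, Function.comp_def, hc, ContinuousMultilinearMap.map_smul_univ] using
    congrArg (fun L => L fun _ => (1 : 𝕜)) hcomp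

end Scaling

section Vanishing

variable {𝔸 : Type*} [NormedRing 𝔸] [NormedAlgebra 𝕜 𝔸]

theorem iteratedDeriv_fun_mul_eq_zero_of_forall_le {f g : 𝕜 → 𝔸} {n : ℕ} {x : 𝕜}
    (hf : ContDiffAt 𝕜 n f x) (hg : ContDiffAt 𝕜 n g x)
    (hfx : ∀ i ≤ n, iteratedDeriv i f x = 0) :
    iteratedDeriv n (fun y => f y * g y) x = 0 := by
  rw [iteratedDeriv_fun_mul hf hg]
  refine Finset.sum_eq_zero fun i hi => ?_
  rw [hfx i (Nat.lt_succ_iff.mp (Finset.mem_range.mp hi)), mul_zero, zero_mul]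

theorem iteratedDeriv_pow_eq_zero_of_lt {f : 𝕜 → 𝔸} {x : 𝕜} (hf : ContDiffAt 𝕜 ∞ f x)
    (hfx : f x = 0) {m j : ℕ} (hj : j < m) : iteratedDeriv j (fun y => f y ^ m) x = 0 := by
  induction m generalizing j with
  | zero => omega
  | succ m ih =>
    have hj : (j : WithTop ℕ∞) ≤ ∞ := mod_cast le_top
    simp only [pow_succ']
    rw [iteratedDeriv_fun_mul (hf.of_le hj) ((hf.pow m).of_le hj)]
    refine Finset.sum_eq_zero fun i hi => ?_
    rcases i with _ | i
    · simp [hfx]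
    · rw [ih (by have := Finset.mem_range.mp hi; omega), mul_zero]

end Vanishing

end IteratedDeriv

section Parity

variable {E : Type*} [NormedAddCommGroup E] [NormedSpace ℝ E]

theorem Function.Even.iteratedDeriv_zero_eq_zero {f : ℝ → E} (hf : f.Even) {n : ℕ}
    (hn : Odd n) : iteratedDeriv n f 0 = 0 := by
  have h := iteratedDeriv_comp_neg n f 0
  rw [show (fun x => f (-x)) = f from funext hf, neg_zero, hn.neg_one_pow, neg_one_smul] at h
  have h2 : (2 : ℝ) • iteratedDeriv n f 0 = 0 := by
    rw [two_smul]; nth_rewrite 2 [h]; exact add_neg_cancel _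
  exact (smul_eq_zero.mp h2).resolve_left two_ne_zero

theorem Function.Odd.iteratedDeriv_zero_eq_zero {f : ℝ → E} (hf : f.Odd) {n : ℕ}
    (hn : Even n) : iteratedDeriv n f 0 = 0 := by
  have h := iteratedDeriv_comp_neg n f 0
  rw [show (fun x => f (-x)) = fun x => -f x from funext hf, neg_zero, hn.neg_one_pow, one_smul,
    iteratedDeriv_fun_neg] at h
  have h2 : (2 : ℝ) • iteratedDeriv n f 0 = 0 := by
    rw [two_smul]; nth_rewrite 2 [← h]; exact add_neg_cancel _
  exact (smul_eq_zero.mp h2).resolve_left two_ne_zero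

end Parity

theorem secantNumber_eq_zero_of_odd {n : ℕ} (hn : Odd n) : secantNumber n = 0 :=
  Function.Even.iteratedDeriv_zero_eq_zero (fun x => by simp) hn

theorem tangentNumber_eq_zero_of_even {n : ℕ} (hn : Even n) : tangentNumber n = 0 :=
  Function.Odd.iteratedDeriv_zero_eq_zero tan_neg hn

theorem Real.sec_two_mul_add_tan_two_mul_sub_tan_mul_one_sub_tan {t : ℝ} (h1 : cos t ≠ 0)
    (h2 : cos (2 * t) ≠ 0) :
    (1 / cos (2 * t) + tan (2 * t) - tan t) * (1 - tan t) = 1 / cos t ^ 2 := by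
  rw [tan_eq_sin_div_cos, tan_eq_sin_div_cos, sin_two_mul]
  rw [cos_two_mul'] at h2 ⊢
  field_simp
  linear_combination (cos t - sin t) * sin t * sin_sq_add_cos_sq t

theorem Real.hasDerivAt_sum_tan_pow_succ_div {t : ℝ} (ht : cos t ≠ 0) (m : ℕ) :
    HasDerivAt (fun x => ∑ j ∈ range m, tan x ^ (j + 1) / (j + 1))
      ((∑ j ∈ range m, tan t ^ j) / cos t ^ 2) t := by
  rw [sum_div]
  refine HasDerivAt.fun_sum fun j _ => ?_
  refine (((hasDerivAt_tan ht).fun_pow (j + 1)).div_const ((j : ℝ) + 1)).congr_deriv ?_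
  rw [Nat.add_sub_cancel]
  push_cast
  field_simp

theorem sum_factorial_mul_T_eq_iteratedDeriv (n m : ℕ) :
    ∑ k ∈ Icc 1 m, ((k - 1).factorial : ℝ) * T n k =
      iteratedDeriv n (fun x => ∑ j ∈ range m, tan x ^ (j + 1) / (j + 1)) 0 := by
  have htan : ContDiffAt ℝ n tan 0 := contDiffAt_tan.2 (by simp)
  rw [iteratedDeriv_fun_sum fun j _ => (htan.pow _).div_const _, ← Ico_add_one_right_eq_Icc,
    sum_Ico_eq_sum_range, Nat.add_sub_cancel]
  refine sum_congr rfl fun j _ => ?_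
  rw [iteratedDeriv_div_const, T, add_comm 1 j, Nat.add_sub_cancel, Nat.factorial_succ]
  push_cast
  field_simp

theorem Real.iteratedDeriv_succ_sum_tan_pow_succ_div (n : ℕ) :
    iteratedDeriv (n + 1) (fun x => ∑ j ∈ range (n + 1), tan x ^ (j + 1) / (j + 1)) 0 =
      iteratedDeriv n (fun t => 1 / cos (2 * t) + tan (2 * t) - tan t) 0 := by
  set F : ℝ → ℝ := fun t => 1 / cos (2 * t) + tan (2 * t) - tan t
  have hcos : ∀ᶠ t in 𝓝 0, cos t ≠ 0 ∧ cos (2 * t) ≠ 0 := by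
    refine (continuous_cos.continuousAt.eventually_ne ?_).and
      ((continuous_cos.comp (continuous_const_mul 2)).continuousAt.eventually_ne ?_) <;> simp
  have hderiv : deriv (fun x => ∑ j ∈ range (n + 1), tan x ^ (j + 1) / (j + 1)) =ᶠ[𝓝 0]
      fun t => F t - tan t ^ (n + 1) * F t := by
    filter_upwards [hcos] with t ⟨h1, h2⟩
    rw [(hasDerivAt_sum_tan_pow_succ_div h1 _).deriv, div_eq_mul_one_div,
      ← sec_two_mul_add_tan_two_mul_sub_tan_mul_one_sub_tan h1 h2]
    linear_combination -F t * geom_sum_mul (tan t) (n + 1)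
  have htan : ContDiffAt ℝ ∞ tan 0 := contDiffAt_tan.2 (by simp)
  have hF : ContDiffAt ℝ ∞ F 0 :=
    ((contDiffAt_const.div contDiff_cos.contDiffAt (by simp)).comp_const_mul.add
      (contDiffAt_tan.2 (by simp)).comp_const_mul).sub htan
  have hn : (n : WithTop ℕ∞) ≤ ∞ := mod_cast le_top
  have hremainder : iteratedDeriv n (fun t => tan t ^ (n + 1) * F t) 0 = 0 :=
    iteratedDeriv_fun_mul_eq_zero_of_forall_le ((htan.pow _).of_le hn) (hF.of_le hn)
      fun i hi => iteratedDeriv_pow_eq_zero_of_lt htan (by simp) (Nat.lt_succ_of_le hi)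
  rw [iteratedDeriv_succ', hderiv.iteratedDeriv_eq,
    iteratedDeriv_fun_sub (hF.of_le hn) (((htan.pow _).mul hF).of_le hn), hremainder, sub_zero]

theorem Real.iteratedDeriv_sec_two_mul_add_tan_two_mul_sub_tan (n : ℕ) :
    iteratedDeriv n (fun t => 1 / cos (2 * t) + tan (2 * t) - tan t) 0 =
      2 ^ n * secantNumber n + 2 ^ n * tangentNumber n - tangentNumber n := by
  have hsec : ContDiffAt ℝ n (fun t => 1 / cos t) (2 * 0) :=
    contDiffAt_const.div contDiff_cos.contDiffAt (by simp)
  have htan : ContDiffAt ℝ n tan (2 * 0) := contDiffAt_tan.2 (by simp)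
  rw [iteratedDeriv_fun_sub (hsec.comp_const_mul.add htan.comp_const_mul)
      (contDiffAt_tan.2 (by simp)),
    iteratedDeriv_fun_add hsec.comp_const_mul htan.comp_const_mul,
    iteratedDeriv_comp_const_mul_of_contDiffAt hsec,
    iteratedDeriv_comp_const_mul_of_contDiffAt htan,
    mul_zero, smul_eq_mul, smul_eq_mul, secantNumber, tangentNumber]

theorem stmt10_general (n : ℕ) :
    ∑ k ∈ Finset.Icc 1 (n + 1), ((k - 1).factorial : ℝ) * T (n + 1) k =
      if Odd n then ((2 : ℝ) ^ n - 1) * tangentNumber n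
      else (2 : ℝ) ^ n * secantNumber n := by
  rw [sum_factorial_mul_T_eq_iteratedDeriv, Real.iteratedDeriv_succ_sum_tan_pow_succ_div,
    Real.iteratedDeriv_sec_two_mul_add_tan_two_mul_sub_tan]
  split_ifs with hn
  · rw [secantNumber_eq_zero_of_odd hn]
    ring
  · rw [tangentNumber_eq_zero_of_even (Nat.not_odd_iff_even.mp hn)]
    ring

theorem stmt10 (n : ℕ) (hn : 1 ≤ n) :
    ∑ k ∈ Finset.Icc 1 (n + 1), ((k - 1).factorial : ℝ) * T (n + 1) k =
      if Odd n then ((2 : ℝ) ^ n - 1) * tangentNumber n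
      else (2 : ℝ) ^ n * secantNumber n :=
  stmt10_general n
end

section
/- For every n ≥ 1, Σ_{k=0}^{n} k! · T(n,k) equals 2^{n−1} · T_n if n is odd and 2^{n−1} · S_n if n is even, where T_n and S_n are the tangent and secant numbers. -/
open Real Finset

namespace Stmt11Aux

open Set Topology

lemma itdw_open {f : ℝ → ℝ} {s : Set ℝ} (hs : IsOpen s) {x : ℝ} (hx : x ∈ s) (n : ℕ) :
    iteratedDerivWithin n f s x = iteratedDeriv n f x := by
  rw [iteratedDerivWithin, iteratedDeriv_eq_iteratedFDeriv,
    iteratedFDerivWithin_of_isOpen n hs hx]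

lemma itd_add {f g : ℝ → ℝ} {s : Set ℝ} (hs : IsOpen s) {x : ℝ} (hx : x ∈ s) (n : ℕ)
    (hf : ContDiffOn ℝ (⊤ : ℕ∞) f s) (hg : ContDiffOn ℝ (⊤ : ℕ∞) g s) :
    iteratedDeriv n (fun t => f t + g t) x = iteratedDeriv n f x + iteratedDeriv n g x := by
  rw [← itdw_open hs hx, ← itdw_open hs hx (f := f), ← itdw_open hs hx (f := g)]
  exact iteratedDerivWithin_add hx hs.uniqueDiffOn ((hf x hx).of_le (mod_cast le_top)) ((hg x hx).of_le (mod_cast le_top))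

lemma itd_const_mul {f : ℝ → ℝ} {s : Set ℝ} (hs : IsOpen s) {x : ℝ} (hx : x ∈ s) (n : ℕ)
    (c : ℝ) (hf : ContDiffOn ℝ (⊤ : ℕ∞) f s) :
    iteratedDeriv n (fun t => c * f t) x = c * iteratedDeriv n f x := by
  rw [← itdw_open hs hx, ← itdw_open hs hx (f := f)]
  exact iteratedDerivWithin_const_mul hx hs.uniqueDiffOn c ((hf x hx).of_le (mod_cast le_top))

lemma itd_const {n : ℕ} (hn : n ≠ 0) (c x : ℝ) : iteratedDeriv n (fun _ : ℝ => c) x = 0 := by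
  rw [iteratedDeriv_eq_iteratedFDeriv, iteratedFDeriv_const_of_ne hn]
  simp

lemma itd_zero (n : ℕ) (x : ℝ) : iteratedDeriv n (fun _ : ℝ => (0:ℝ)) x = 0 := by
  cases n with
  | zero => simp
  | succ m => exact itd_const (Nat.succ_ne_zero m) 0 x

lemma itd_sum {s : Set ℝ} (hs : IsOpen s) {x : ℝ} (hx : x ∈ s) (n : ℕ)
    {ι : Type*} (A : Finset ι) (f : ι → ℝ → ℝ) (hf : ∀ i ∈ A, ContDiffOn ℝ (⊤ : ℕ∞) (f i) s) :
    iteratedDeriv n (fun t => ∑ i ∈ A, f i t) x = ∑ i ∈ A, iteratedDeriv n (f i) x := by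
  classical
  induction A using Finset.induction_on with
  | empty => simpa using itd_zero n x
  | @insert a A ha ih =>
    have hfa : ContDiffOn ℝ (⊤ : ℕ∞) (f a) s := hf a (Finset.mem_insert_self a A)
    have hlt : ∀ i ∈ A, ContDiffOn ℝ (⊤ : ℕ∞) (f i) s := fun i hi => hf i (Finset.mem_insert_of_mem hi)
    have hsum : ContDiffOn ℝ (⊤ : ℕ∞) (fun t => ∑ i ∈ A, f i t) s := by
      apply ContDiffOn.sum (fun i hi => hlt i hi)
    have h1 : (fun t => ∑ i ∈ insert a A, f i t) = fun t => f a t + ∑ i ∈ A, f i t := by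
      funext t; rw [Finset.sum_insert ha]
    rw [h1, itd_add hs hx n hfa hsum, ih hlt, Finset.sum_insert ha]

lemma itd_scale {s : Set ℝ} (hs : IsOpen s) (c : ℝ) :
    ∀ (n : ℕ) (f : ℝ → ℝ), ContDiffOn ℝ (⊤ : ℕ∞) f s → ∀ x : ℝ, c * x ∈ s →
      iteratedDeriv n (fun t => f (c * t)) x = c ^ n * iteratedDeriv n f (c * x) := by
  intro n
  induction n with
  | zero => intro f hf x hx; simp
  | succ n ih =>
    intro f hf x hx
    have hsub : IsOpen ((fun t : ℝ => c * t) ⁻¹' s) :=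
      hs.preimage (continuous_const.mul continuous_id)
    have hf' : ContDiffOn ℝ (⊤ : ℕ∞) (deriv f) s := hf.deriv_of_isOpen hs (mod_cast le_top)
    have hev : (deriv fun t => f (c * t)) =ᶠ[𝓝 x] fun t => c * deriv f (c * t) := by
      filter_upwards [hsub.mem_nhds hx] with y hy
      have hd : DifferentiableAt ℝ f (c * y) :=
        (hf.differentiableOn (by simp)).differentiableAt (hs.mem_nhds hy)
      have h2 : HasDerivAt (fun t : ℝ => f (c * t)) (deriv f (c * y) * (c * 1)) y := by
        have hin : HasDerivAt (fun t : ℝ => c * t) (c * 1) y :=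
          (hasDerivAt_id y).const_mul c
        exact HasDerivAt.comp y hd.hasDerivAt hin
      rw [h2.deriv]; ring
    rw [iteratedDeriv_succ', Filter.EventuallyEq.iteratedDeriv_eq n hev,
      ih (fun y => c * deriv f y) (contDiffOn_const.mul hf') x hx,
      itd_const_mul hs hx n c hf', ← iteratedDeriv_succ']
    ring

lemma itd_vanish {s : Set ℝ} (hs : IsOpen s) (h0 : (0:ℝ) ∈ s) {f : ℝ → ℝ}
    (hf : ContDiffOn ℝ (⊤ : ℕ∞) f s) (hf0 : f 0 = 0) :
    ∀ (m j : ℕ) (g : ℝ → ℝ), ContDiffOn ℝ (⊤ : ℕ∞) g s → m < j →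
      iteratedDeriv m (fun t => f t ^ j * g t) 0 = 0 := by
  intro m
  induction m with
  | zero =>
    intro j g hg hj
    have : j ≠ 0 := by omega
    simp [iteratedDeriv_zero, hf0, zero_pow this]
  | succ m ih =>
    intro j g hg hj
    obtain ⟨j', rfl⟩ : ∃ j'', j = j'' + 1 := ⟨j - 1, by omega⟩
    have hdf' : ContDiffOn ℝ (⊤ : ℕ∞) (deriv f) s := hf.deriv_of_isOpen hs (mod_cast le_top)
    have hdg' : ContDiffOn ℝ (⊤ : ℕ∞) (deriv g) s := hg.deriv_of_isOpen hs (mod_cast le_top)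
    have hev : (deriv fun t => f t ^ (j' + 1) * g t) =ᶠ[𝓝 (0:ℝ)]
        fun t => f t ^ j' * ((((j':ℝ) + 1)) * deriv f t * g t + f t * deriv g t) := by
      filter_upwards [hs.mem_nhds h0] with y hy
      have hdf : DifferentiableAt ℝ f y :=
        (hf.differentiableOn (by simp)).differentiableAt (hs.mem_nhds hy)
      have hdg : DifferentiableAt ℝ g y :=
        (hg.differentiableOn (by simp)).differentiableAt (hs.mem_nhds hy)
      rw [deriv_fun_mul (hdf.fun_pow _) hdg, (hdf.hasDerivAt.fun_pow _).deriv]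
      push_cast
      ring
    rw [iteratedDeriv_succ', Filter.EventuallyEq.iteratedDeriv_eq m hev]
    exact ih j' _ (((contDiffOn_const.mul hdf').mul hg).add (hf.mul hdg')) (by omega)

lemma tangent_even_zero {n : ℕ} (hn : Even n) : tangentNumber n = 0 := by
  have h := iteratedDeriv_comp_neg n Real.tan 0
  have h2 : (fun x : ℝ => Real.tan (-x)) = -Real.tan := funext fun x => Real.tan_neg x
  rw [h2, neg_zero, iteratedDeriv_neg, hn.neg_one_pow, one_smul] at h
  unfold tangentNumber
  linarith [h]

lemma secant_odd_zero {n : ℕ} (hn : Odd n) : secantNumber n = 0 := by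
  have h := iteratedDeriv_comp_neg n (fun t : ℝ => 1 / Real.cos t) 0
  have h2 : (fun x : ℝ => 1 / Real.cos (-x)) = fun x : ℝ => 1 / Real.cos x := by
    funext x; rw [Real.cos_neg]
  rw [h2, neg_zero, hn.neg_one_pow] at h
  unfold secantNumber
  simp only [neg_smul, one_smul] at h
  linarith [h]

lemma sin_lt_cos_of_small {t : ℝ} (h1 : -(π/8) < t) (h2 : t < π/8) :
    Real.sin t < Real.cos t := by
  have hpi := Real.pi_pos
  have h3 : Real.sin t < Real.sin (π/4) :=
    Real.strictMonoOn_sin ⟨by linarith, by linarith⟩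
      ⟨by linarith, by linarith⟩ (by linarith)
  have h4 : Real.cos (π/4) < Real.cos |t| := by
    apply Real.cos_lt_cos_of_nonneg_of_le_pi (abs_nonneg t) (by linarith)
    rw [abs_lt]; constructor <;> linarith
  rw [Real.cos_abs] at h4
  rw [Real.sin_pi_div_four] at h3
  rw [Real.cos_pi_div_four] at h4
  linarith

end Stmt11Aux

open Stmt11Aux Set Topology in
theorem stmt11 (n : ℕ) (hn : 1 ≤ n) :
    ∑ k ∈ Finset.range (n + 1), (k.factorial : ℝ) * T n k =
      (2 : ℝ) ^ (n - 1) *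
        (if Odd n then tangentNumber n else secantNumber n) := by
  have hpi := Real.pi_pos
  set U : Set ℝ := Set.Ioo (-(π/8)) (π/8) with hUdef
  set V : Set ℝ := Set.Ioo (-(π/4)) (π/4) with hVdef
  have hU : IsOpen U := isOpen_Ioo
  have hV : IsOpen V := isOpen_Ioo
  have h0U : (0:ℝ) ∈ U := ⟨by linarith, by linarith⟩
  have h0V : (0:ℝ) ∈ V := ⟨by linarith, by linarith⟩
  have hUV : U ⊆ V := Set.Ioo_subset_Ioo (by linarith) (by linarith)
  -- basic positivity facts
  have hcosV : ∀ x ∈ V, Real.cos x ≠ 0 := by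
    intro x hx
    exact (Real.cos_pos_of_mem_Ioo ⟨by cases hx with
      | intro a b => linarith, by cases hx with | intro a b => linarith⟩).ne'
  have hcosU : ∀ x ∈ U, (0:ℝ) < Real.cos x := by
    intro x hx
    exact Real.cos_pos_of_mem_Ioo ⟨by cases hx with
      | intro a b => linarith, by cases hx with | intro a b => linarith⟩
  have hcsU : ∀ x ∈ U, (0:ℝ) < Real.cos x - Real.sin x := by
    intro x hx
    have := sin_lt_cos_of_small hx.1 hx.2
    linarith
  have hcpsU : ∀ x ∈ U, (0:ℝ) < Real.cos x + Real.sin x := by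
    intro x hx
    have hx' : -x ∈ U := ⟨by cases hx with | intro a b => linarith,
      by cases hx with | intro a b => linarith⟩
    have := sin_lt_cos_of_small hx'.1 hx'.2
    rw [Real.sin_neg, Real.cos_neg] at this
    linarith
  -- smoothness
  have htanV : ContDiffOn ℝ (⊤ : ℕ∞) Real.tan V := fun x hx =>
    (Real.contDiffAt_tan.2 (hcosV x hx)).contDiffWithinAt
  have hsecV : ContDiffOn ℝ (⊤ : ℕ∞) (fun t : ℝ => 1 / Real.cos t) V :=
    contDiffOn_const.div Real.contDiff_cos.contDiffOn hcosV
  have htanU : ContDiffOn ℝ (⊤ : ℕ∞) Real.tan U := htanV.mono hUV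
  set g : ℝ → ℝ := fun t => Real.cos t / (Real.cos t - Real.sin t) with hgdef
  have hgU : ContDiffOn ℝ (⊤ : ℕ∞) g U :=
    Real.contDiff_cos.contDiffOn.div
      (Real.contDiff_cos.sub Real.contDiff_sin).contDiffOn
      (fun x hx => (hcsU x hx).ne')
  have hmul2 : ContDiff ℝ (⊤ : ℕ∞) (fun t : ℝ => 2 * t) := contDiff_const.mul contDiff_id
  have hmaps : ∀ x ∈ U, (fun t : ℝ => 2 * t) x ∈ V := by
    intro x hx
    exact ⟨by cases hx with | intro a b => simp only; linarith,
      by cases hx with | intro a b => simp only; linarith⟩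
  have htan2U : ContDiffOn ℝ (⊤ : ℕ∞) (fun t : ℝ => Real.tan (2 * t)) U :=
    htanV.comp hmul2.contDiffOn hmaps
  have hsec2U : ContDiffOn ℝ (⊤ : ℕ∞) (fun t : ℝ => 1 / Real.cos (2 * t)) U :=
    hsecV.comp hmul2.contDiffOn hmaps
  -- the key identity on U
  have hId : ∀ t ∈ U,
      ((∑ k ∈ Finset.range (n+1), Real.tan t ^ k) + Real.tan t ^ (n+1) * g t)
        = 1/2 + 1/2 * Real.tan (2*t) + 1/2 * (1 / Real.cos (2*t)) := by
    intro t ht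
    have h1 : (0:ℝ) < Real.cos t := hcosU t ht
    have h2 : (0:ℝ) < Real.cos t - Real.sin t := hcsU t ht
    have h3 : (0:ℝ) < Real.cos t + Real.sin t := hcpsU t ht
    set c := Real.cos t
    set s := Real.sin t
    have pyth : s ^ 2 + c ^ 2 = 1 := Real.sin_sq_add_cos_sq t
    have htan : Real.tan t = s / c := Real.tan_eq_sin_div_cos t
    have htan1 : Real.tan t ≠ 1 := by
      rw [htan]; intro h
      rw [div_eq_one_iff_eq h1.ne'] at h
      linarith
    have h1x : 1 - Real.tan t ≠ 0 := sub_ne_zero.mpr (Ne.symm htan1)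
    have hx1 : Real.tan t - 1 ≠ 0 := sub_ne_zero.mpr htan1
    have hg : c / (c - s) = 1 / (1 - Real.tan t) := by
      rw [htan, one_sub_div h1.ne', one_div_div]
    have hL : (∑ k ∈ Finset.range (n+1), Real.tan t ^ k) +
        Real.tan t ^ (n+1) * (c / (c - s)) = 1 / (1 - Real.tan t) := by
      rw [hg, geom_sum_eq htan1]
      field_simp
      ring
    rw [hgdef]
    rw [hL]
    have hc2 : Real.cos (2*t) = c^2 - s^2 := Real.cos_two_mul' t
    have hs2 : Real.sin (2*t) = 2 * s * c := Real.sin_two_mul t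
    have hcs2ne : c^2 - s^2 ≠ 0 := by nlinarith
    have htan2 : Real.tan (2*t) = (2*s*c) / (c^2 - s^2) := by
      rw [Real.tan_eq_sin_div_cos, hs2, hc2]
    rw [htan2, hc2, htan]
    field_simp
    nlinarith [pyth]
  -- apply iterated derivatives
  have hFG : (fun t => (∑ k ∈ Finset.range (n+1), Real.tan t ^ k)
        + Real.tan t ^ (n+1) * g t)
      =ᶠ[𝓝 (0:ℝ)] fun t => 1/2 + 1/2 * Real.tan (2*t) + 1/2 * (1 / Real.cos (2*t)) := by
    filter_upwards [hU.mem_nhds h0U] with t ht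
    exact hId t ht
  have hmain := Filter.EventuallyEq.iteratedDeriv_eq n hFG
  -- compute LHS
  have hpowk : ∀ k ∈ Finset.range (n+1), ContDiffOn ℝ (⊤ : ℕ∞) (fun t : ℝ => Real.tan t ^ k) U :=
    fun k _ => htanU.pow k
  have hprod : ContDiffOn ℝ (⊤ : ℕ∞) (fun t : ℝ => Real.tan t ^ (n+1) * g t) U :=
    (htanU.pow (n+1)).mul hgU
  have hLHS : iteratedDeriv n (fun t => (∑ k ∈ Finset.range (n+1), Real.tan t ^ k)
        + Real.tan t ^ (n+1) * g t) 0
      = ∑ k ∈ Finset.range (n+1), iteratedDeriv n (fun t : ℝ => Real.tan t ^ k) 0 := by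
    rw [itd_add hU h0U n (ContDiffOn.sum hpowk) hprod,
      itd_sum hU h0U n _ _ hpowk,
      itd_vanish hU h0U htanU Real.tan_zero n (n+1) g hgU (Nat.lt_succ_self n)]
    ring
  -- compute RHS
  have hRHS : iteratedDeriv n (fun t => 1/2 + 1/2 * Real.tan (2*t)
        + 1/2 * (1 / Real.cos (2*t))) 0
      = 1/2 * (2:ℝ)^n * tangentNumber n + 1/2 * (2:ℝ)^n * secantNumber n := by
    have hsum1 : ContDiffOn ℝ (⊤ : ℕ∞)
        (fun t : ℝ => 1/2 + 1/2 * Real.tan (2*t)) U :=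
      contDiffOn_const.add (contDiffOn_const.mul htan2U)
    have e1 : iteratedDeriv n (fun t => 1/2 + 1/2 * Real.tan (2*t)
          + 1/2 * (1 / Real.cos (2*t))) 0
        = iteratedDeriv n (fun t : ℝ => 1/2 + 1/2 * Real.tan (2*t)) 0
          + iteratedDeriv n (fun t : ℝ => 1/2 * (1 / Real.cos (2*t))) 0 :=
      itd_add hU h0U n hsum1 (contDiffOn_const.mul hsec2U)
    have e2 : iteratedDeriv n (fun t : ℝ => 1/2 + 1/2 * Real.tan (2*t)) 0
        = iteratedDeriv n (fun _ : ℝ => (1/2 : ℝ)) 0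
          + iteratedDeriv n (fun t : ℝ => 1/2 * Real.tan (2*t)) 0 :=
      itd_add hU h0U n contDiffOn_const (contDiffOn_const.mul htan2U)
    have e3 : iteratedDeriv n (fun t : ℝ => 1/2 * Real.tan (2*t)) 0
        = 1/2 * iteratedDeriv n (fun t : ℝ => Real.tan (2*t)) 0 :=
      itd_const_mul hU h0U n _ htan2U
    have e4 : iteratedDeriv n (fun t : ℝ => 1/2 * (1 / Real.cos (2*t))) 0
        = 1/2 * iteratedDeriv n (fun t : ℝ => 1 / Real.cos (2*t)) 0 :=
      itd_const_mul hU h0U n _ hsec2U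
    have h20 : (2:ℝ) * 0 ∈ V := by simpa using h0V
    have e5 := itd_scale hV 2 n Real.tan htanV 0 h20
    have e6 := itd_scale hV 2 n (fun t : ℝ => 1 / Real.cos t) hsecV 0 h20
    simp only [mul_zero] at e5 e6
    rw [e1, e2, e3, e4, itd_const (by omega) _ _, e5, e6]
    unfold tangentNumber secantNumber
    ring
  -- put everything together
  have hterm : ∀ k ∈ Finset.range (n+1), (k.factorial : ℝ) * T n k
      = iteratedDeriv n (fun t : ℝ => Real.tan t ^ k) 0 := by
    intro k _
    unfold T
    have : (k.factorial : ℝ) ≠ 0 := Nat.cast_ne_zero.mpr k.factorial_ne_zero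
    field_simp
  rw [Finset.sum_congr rfl hterm, ← hLHS, hmain, hRHS]
  have hpow : (2:ℝ)^n = 2 * 2^(n-1) := by
    obtain ⟨m, rfl⟩ := Nat.exists_eq_add_of_le hn
    rw [Nat.add_sub_cancel_left, pow_add, pow_one]
  by_cases hodd : Odd n
  · rw [if_pos hodd, secant_odd_zero hodd, hpow]
    ring
  · rw [if_neg hodd, tangent_even_zero (Nat.not_odd_iff_even.mp hodd), hpow]
    ring
end

section
/- For every integer n ≥ 1, tan(t)^n = (1/(n−1)!) · Σ_{r=0}^{n−1} T*(n, r+1) · D_t^r tan(t) + c_n, where c_n = 0 if n is odd and c_n = (−1)^{n/2} if n is even, and T*(n,k) are the higher-order arctangent numbers. -/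
open Real Finset

open Polynomial
open scoped ContDiff

/-! Write `tan⁽ʳ⁾ = Pᵣ(tan)` with `P₀ = X`, `Pᵣ₊₁ = (1 + X²) Pᵣ'` (`tanDerivPoly`).
Differentiating `(1 + x²) (arctanᵏ⁺¹ / (k+1)!)' = arctanᵏ / k!` `n` times at `0` (Leibniz)
gives the recurrence of `T*`, which turns `Qₙ = ∑ᵣ T*(n, r+1) Pᵣ` (`tstarTanPoly`) into
`Qₙ₊₂ = (1 + X²) Qₙ₊₁' - (n+1) n Qₙ`. Since `cₙ₊₂ = -cₙ` (`tanPowConst`), the polynomials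
`(n-1)! (Xⁿ - cₙ)` satisfy the same recurrence with the same initial values, so
`Qₙ = (n-1)! (Xⁿ - cₙ)`; evaluating at `tan t` gives the identity. -/

theorem iteratedDeriv_sq_mul_deriv_zero {𝕜 : Type*} [NontriviallyNormedField 𝕜] {f : 𝕜 → 𝕜}
    (hf : ContDiff 𝕜 ∞ f) (n : ℕ) :
    iteratedDeriv n (fun x => x ^ 2 * deriv f x) 0 = n * (n - 1) * iteratedDeriv (n - 1) f 0 := by
  have hf' : ContDiffAt 𝕜 n (deriv f) 0 :=
    ((hf.iterate_deriv 1).of_le (by exact_mod_cast le_top)).contDiffAt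
  rw [iteratedDeriv_fun_mul (by fun_prop) hf', Finset.sum_eq_single 2]
  · rcases n with _ | _ | n
    · simp
    · simp
    · have hchoose : ((n + 2).choose 2 : 𝕜) * 2 = (n + 2) * (n + 1) := by
        have h : (n + 2).choose 2 * 2 = (n + 2) * (n + 1) := by
          rw [Nat.choose_two_right, Nat.div_mul_cancel (Nat.even_mul_pred_self _).two_dvd]
          rfl
        exact_mod_cast congrArg (Nat.cast (R := 𝕜)) h
      rw [iteratedDeriv_fun_pow_zero, if_pos rfl, show n + 2 - 2 = n by omega,
        ← iteratedDeriv_succ', Nat.factorial_two]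
      push_cast
      linear_combination iteratedDeriv (n + 1) f 0 * hchoose
  · intro i _ hi
    rw [iteratedDeriv_fun_pow_zero, if_neg hi]
    simp
  · intro h
    rw [Nat.choose_eq_zero_of_lt (by simpa using h)]
    simp

theorem Tstar_eq_iteratedDeriv (n k : ℕ) :
    Tstar n k = iteratedDeriv n (fun t => arctan t ^ k / (k.factorial : ℝ)) 0 :=
  (iteratedDeriv_div_const _ _).symm

theorem one_add_sq_mul_deriv_arctan_pow_div_factorial (k : ℕ) (x : ℝ) :
    (1 + x ^ 2) * deriv (fun t => arctan t ^ (k + 1) / ((k + 1).factorial : ℝ)) x =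
      arctan x ^ k / (k.factorial : ℝ) := by
  rw [(((hasDerivAt_arctan' x).fun_pow (k + 1)).div_const _).deriv, Nat.factorial_succ]
  have : (1 + x ^ 2) ≠ 0 := by positivity
  push_cast
  field_simp

theorem Tstar_succ_succ (n k : ℕ) :
    Tstar (n + 1) (k + 1) = Tstar n k - n * (n - 1) * Tstar (n - 1) (k + 1) := by
  set a : ℝ → ℝ := fun t => arctan t ^ (k + 1) / ((k + 1).factorial : ℝ)
  have ha : ContDiff ℝ ∞ a := (contDiff_arctan.pow _).div_const _
  have hda : ContDiff ℝ ∞ (deriv a) := ha.iterate_deriv 1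
  have hsplit : (fun t => arctan t ^ k / (k.factorial : ℝ)) =
      fun x => deriv a x + x ^ 2 * deriv a x := by
    funext x
    rw [← one_add_sq_mul_deriv_arctan_pow_div_factorial]
    ring
  have hle : (n : WithTop ℕ∞) ≤ ∞ := by exact_mod_cast le_top
  rw [Tstar_eq_iteratedDeriv n, hsplit, iteratedDeriv_fun_add (hda.contDiffAt.of_le hle)
      (((contDiff_fun_id.pow 2).mul hda).contDiffAt.of_le hle),
    iteratedDeriv_sq_mul_deriv_zero ha, ← iteratedDeriv_succ', Tstar_eq_iteratedDeriv,
    Tstar_eq_iteratedDeriv]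
  ring

theorem Tstar_zero_zero : Tstar 0 0 = 1 := by
  simp [Tstar]

theorem Tstar_succ_zero (n : ℕ) : Tstar (n + 1) 0 = 0 := by
  simp [Tstar, iteratedDeriv_const]

theorem Tstar_eq_zero_of_lt {n k : ℕ} (h : n < k) : Tstar n k = 0 := by
  induction n using Nat.strong_induction_on generalizing k with
  | _ n ih =>
    obtain ⟨j, rfl⟩ : ∃ j, k = j + 1 := ⟨k - 1, by omega⟩
    rcases n with _ | n
    · simp [Tstar]
    · rw [Tstar_succ_succ, ih n (by omega) (by omega), ih (n - 1) (by omega) (by omega)]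
      ring

theorem Tstar_one_one : Tstar 1 1 = 1 := by
  simpa [Tstar_zero_zero] using Tstar_succ_succ 0 0

noncomputable def tanDerivPoly : ℕ → ℝ[X]
  | 0 => X
  | r + 1 => derivative (tanDerivPoly r) * (1 + X ^ 2)

theorem iteratedDeriv_tan_eq_eval {x : ℝ} (hx : cos x ≠ 0) (r : ℕ) :
    iteratedDeriv r tan x = (tanDerivPoly r).eval (tan x) := by
  induction r generalizing x with
  | zero => simp [tanDerivPoly]
  | succ r ih =>
    have hev : iteratedDeriv r tan =ᶠ[nhds x] fun y => (tanDerivPoly r).eval (tan y) := by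
      filter_upwards [(isOpen_ne.preimage continuous_cos).mem_nhds hx] with y hy using ih hy
    have hP : HasDerivAt (fun y => (tanDerivPoly r).eval (tan y))
        ((derivative (tanDerivPoly r)).eval (tan x) * (1 / cos x ^ 2)) x :=
      ((tanDerivPoly r).hasDerivAt (tan x)).comp x (hasDerivAt_tan hx)
    rw [iteratedDeriv_succ, hev.deriv_eq, hP.deriv, tanDerivPoly, eval_mul, one_div,
      ← inv_one_add_tan_sq hx, inv_inv]
    simp

noncomputable def tstarTanPoly (n : ℕ) : ℝ[X] :=
  ∑ r ∈ range n, C (Tstar n (r + 1)) * tanDerivPoly r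

theorem tstarTanPoly_add_two (m : ℕ) :
    tstarTanPoly (m + 2) =
      derivative (tstarTanPoly (m + 1)) * (1 + X ^ 2) - C (((m : ℝ) + 1) * m) * tstarTanPoly m := by
  have hderiv : derivative (tstarTanPoly (m + 1)) * (1 + X ^ 2) =
      ∑ r ∈ range (m + 1), C (Tstar (m + 1) (r + 1)) * tanDerivPoly (r + 1) := by
    simp only [tstarTanPoly, map_sum, sum_mul, derivative_C_mul, mul_assoc, tanDerivPoly]
  have hlower : ∑ r ∈ range (m + 2), C (Tstar m (r + 1)) * tanDerivPoly r = tstarTanPoly m := by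
    simp [tstarTanPoly, sum_range_succ, Tstar_eq_zero_of_lt]
  have hrec (r : ℕ) : C (Tstar (m + 2) (r + 1)) * tanDerivPoly r =
      C (Tstar (m + 1) r) * tanDerivPoly r -
        C (((m : ℝ) + 1) * m) * (C (Tstar m (r + 1)) * tanDerivPoly r) := by
    rw [Tstar_succ_succ, map_sub, map_mul]
    push_cast
    ring_nf
  rw [tstarTanPoly, sum_congr rfl fun r _ => hrec r, sum_sub_distrib, ← mul_sum, hlower, hderiv,
    sum_range_succ', Tstar_succ_zero, map_zero, zero_mul, add_zero]

noncomputable def tanPowConst (n : ℕ) : ℝ := if Odd n then 0 else (-1) ^ (n / 2)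

theorem tanPowConst_add_two (n : ℕ) : tanPowConst (n + 2) = -tanPowConst n := by
  rcases Nat.even_or_odd n with h | h
  · have h' : ¬Odd n := Nat.not_odd_iff_even.2 h
    simp [tanPowConst, h', Nat.odd_add_one, pow_succ, Nat.add_div_right]
  · simp [tanPowConst, h, Nat.odd_add]

theorem tstarTanPoly_eq (n : ℕ) :
    tstarTanPoly n = C ((n - 1).factorial : ℝ) * (X ^ n - C (tanPowConst n)) := by
  induction n using Nat.twoStepInduction with
  | zero => simp [tstarTanPoly, tanPowConst]
  | one => simp [tstarTanPoly, tanPowConst, Tstar_one_one, tanDerivPoly]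
  | more n ih₀ ih₁ =>
    rw [tstarTanPoly_add_two, ih₀, ih₁, tanPowConst_add_two, show n + 2 - 1 = n + 1 by omega]
    simp only [derivative_mul, derivative_C, derivative_sub, derivative_X_pow, zero_mul, zero_add,
      sub_zero, map_neg, add_tsub_cancel_right]
    rcases n with _ | n
    · simp [tanPowConst]
      ring
    · simp only [add_tsub_cancel_right, Nat.factorial_succ, Nat.cast_mul, Nat.cast_add,
        Nat.cast_one, map_mul, map_add, map_natCast, map_one]
      ring

theorem sum_Tstar_mul_iteratedDeriv_tan {t : ℝ} (ht : cos t ≠ 0) (n : ℕ) :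
    ∑ r ∈ range n, Tstar n (r + 1) * iteratedDeriv r tan t =
      (n - 1).factorial * (tan t ^ n - tanPowConst n) := by
  simpa [tstarTanPoly, eval_finsetSum, iteratedDeriv_tan_eq_eval ht] using
    congrArg (eval (tan t)) (tstarTanPoly_eq n)

theorem stmt12_general (n : ℕ) (t : ℝ) (ht : |t| < Real.pi / 2) :
    Real.tan t ^ n =
      (1 / ((n - 1).factorial : ℝ)) *
        ∑ r ∈ Finset.range n, Tstar n (r + 1) * iteratedDeriv r Real.tan t +
      (if Odd n then 0 else (-1 : ℝ) ^ (n / 2)) := by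
  have hcos : cos t ≠ 0 := (cos_pos_of_mem_Ioo (abs_lt.mp ht)).ne'
  rw [sum_Tstar_mul_iteratedDeriv_tan hcos, ← mul_assoc, one_div_mul_cancel (by positivity),
    one_mul]
  exact (sub_add_cancel _ _).symm

theorem stmt12 (n : ℕ) (hn : 1 ≤ n) (t : ℝ) (ht : |t| < Real.pi / 2) :
    Real.tan t ^ n =
      (1 / ((n - 1).factorial : ℝ)) *
        ∑ r ∈ Finset.range n, Tstar n (r + 1) * iteratedDeriv r Real.tan t +
      (if Odd n then 0 else (-1 : ℝ) ^ (n / 2)) :=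
  stmt12_general n t ht
end

section
/- For all n ≥ 1 and k ≥ 0, the higher-order tangent number admits the explicit double-sum formula T(n,k) = (−1)^{(n−k)/2} · (−1)^n · (2^n / k!) · Σ_{α=k}^{n} Σ_{β=1}^{α} (−1)^β · C(α−1, k−1) · C(α, β) · β^n / 2^α. -/
open Real Finset

/-!
Since `(tan^k)' = k tan^(k-1) + k tan^(k+1)`, the derivatives `g n k` of `tan^k` at `0` satisfy
`g (n+1) k = k g n (k-1) + k g n (k+1)` and `g 1 k = [k = 1]`. The right-hand side satisfies the
same recurrence: `E n α = ∑ β, (-1)^β C(α,β) β^n` is, up to sign, the `α`-th forward difference of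
`x ↦ x^n`, so it vanishes for `α > n` and obeys `E (n+1) (α+1) = (α+1) (E n (α+1) - E n α)`;
substituting this, a Pascal-type identity for `C(α-1, k-1)` turns the recurrence into a
telescoping sum.
-/

open scoped Topology

section AlternatingPowSum

variable (R : Type*) [CommRing R]

def alternatingPowSum (n α : ℕ) : R :=
  ∑ β ∈ range (α + 1), (-1) ^ β * (α.choose β : R) * (β : R) ^ n

variable {R}

theorem alternatingPowSum_zero_right {n : ℕ} (hn : n ≠ 0) : alternatingPowSum R n 0 = 0 := by
  simp [alternatingPowSum, hn]

theorem alternatingPowSum_eq_sum_Icc {n : ℕ} (hn : n ≠ 0) (α : ℕ) :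
    alternatingPowSum R n α = ∑ β ∈ Icc 1 α, (-1) ^ β * (α.choose β : R) * (β : R) ^ n := by
  rw [alternatingPowSum, range_eq_Ico, sum_eq_sum_Ico_succ_bot α.succ_pos, zero_add,
    Nat.succ_eq_add_one, Ico_add_one_right_eq_Icc]
  simp [hn]

theorem alternatingPowSum_eq_zero_of_lt {n α : ℕ} (h : n < α) :
    alternatingPowSum R n α = 0 := by
  have hΔ := congrFun (fwdDiff_iter_pow_eq_zero_of_lt (R := R) h) 0
  rw [fwdDiff_iter_eq_sum_shift, Pi.zero_apply] at hΔ
  rw [← mul_eq_zero_of_right ((-1) ^ α) hΔ, alternatingPowSum, mul_sum]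
  refine sum_congr rfl fun β hβ => ?_
  have hα : (-1 : R) ^ α = (-1) ^ (α - β) * (-1) ^ β := by
    rw [← pow_add, Nat.sub_add_cancel (Nat.lt_succ_iff.mp (mem_range.mp hβ))]
  have hsq : ((-1 : R) ^ (α - β)) ^ 2 = 1 := by rw [← pow_mul, pow_mul', neg_one_sq, one_pow]
  simp only [zsmul_eq_mul, nsmul_eq_mul, mul_one, zero_add]
  push_cast
  linear_combination (↑(α.choose β) * (β : R) ^ n) * (-(-1) ^ β * hsq - (-1) ^ (α - β) * hα)

theorem alternatingPowSum_succ_succ (n a : ℕ) :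
    alternatingPowSum R (n + 1) (a + 1) =
      (a + 1) * (alternatingPowSum R n (a + 1) - alternatingPowSum R n a) := by
  have hext : alternatingPowSum R n a =
      ∑ β ∈ range (a + 2), (-1) ^ β * (a.choose β : R) * (β : R) ^ n := by
    rw [sum_range_succ _ (a + 1), Nat.choose_succ_self, Nat.cast_zero, mul_zero, zero_mul,
      add_zero, alternatingPowSum]
  rw [hext, alternatingPowSum, alternatingPowSum, ← sum_sub_distrib, mul_sum]
  refine sum_congr rfl fun β _ => ?_
  rcases β with _ | b
  · simp
  have hpascal : ((a + 1).choose (b + 1) : R) = a.choose b + a.choose (b + 1) := by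
    rw [Nat.choose_succ_succ', Nat.cast_add]
  have habsorb : ((a + 1).choose (b + 1) : R) * (b + 1) = (a + 1) * a.choose b := by
    simpa using congrArg (Nat.cast : ℕ → R) (Nat.add_one_mul_choose_eq a b).symm
  push_cast
  linear_combination (-1) ^ (b + 1) * ((b : R) + 1) ^ n * (habsorb - (a + 1) * hpascal)

end AlternatingPowSum

@[simp] theorem chooseZ_natCast (a m : ℕ) : chooseZ a m = a.choose m := by
  simp [chooseZ]

theorem chooseZ_of_neg (a : ℕ) {j : ℤ} (hj : j < 0) : chooseZ a j = 0 := by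
  simp [chooseZ, hj.not_ge]

theorem chooseZ_of_lt {a : ℕ} {j : ℤ} (h : (a : ℤ) < j) : chooseZ a j = 0 := by
  lift j to ℕ using by omega
  simp [Nat.choose_eq_zero_of_lt (by omega : a < j)]

theorem add_two_mul_chooseZ_succ (a : ℕ) (j : ℤ) :
    (a + 2) * chooseZ (a + 1) j =
      2 * (a + 1) * chooseZ a j - (j + 1) * (chooseZ a (j + 1) - chooseZ a (j - 1)) := by
  rcases lt_trichotomy j (-1) with hj | rfl | hj
  · simp [chooseZ_of_neg _ (by omega : j < 0), chooseZ_of_neg _ (by omega : j + 1 < 0),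
      chooseZ_of_neg _ (by omega : j - 1 < 0)]
  · simp [chooseZ_of_neg _ (by omega : (-1 : ℤ) < 0)]
  lift j to ℕ using by omega
  rcases j with _ | i
  · norm_num [chooseZ]
    ring
  have h1 : ((a : ℝ) + 1) * a.choose (i + 1) = (a + 1).choose (i + 2) * (i + 2) := by
    exact_mod_cast Nat.add_one_mul_choose_eq a (i + 1)
  have h2 : ((a : ℝ) + 2) * (a + 1).choose (i + 1) = (a + 2).choose (i + 2) * (i + 2) := by
    exact_mod_cast Nat.add_one_mul_choose_eq (a + 1) (i + 1)
  have h3 : ((a + 2).choose (i + 2) : ℝ) = (a + 1).choose (i + 1) + (a + 1).choose (i + 2) := by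
    exact_mod_cast Nat.choose_succ_succ' (a + 1) (i + 1)
  have h4 : ((a + 1).choose (i + 2) : ℝ) = a.choose (i + 1) + a.choose (i + 2) := by
    exact_mod_cast Nat.choose_succ_succ' a (i + 1)
  have h5 : ((a + 1).choose (i + 1) : ℝ) = a.choose i + a.choose (i + 1) := by
    exact_mod_cast Nat.choose_succ_succ' a i
  rw [show ((i + 1 : ℕ) : ℤ) + 1 = (i + 2 : ℕ) by push_cast; ring,
    show ((i + 1 : ℕ) : ℤ) - 1 = (i : ℕ) by push_cast; ring]
  simp only [chooseZ_natCast]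
  push_cast
  linear_combination h2 - 2 * h1 + ((i : ℝ) + 2) * (h3 - h4 + h5)

/-- The double sum of the formula at `j = k - 1`, reindexed by `α = a + 1`; `j` is an integer so
that `j - 1` does not truncate. -/
noncomputable def tanSum (n : ℕ) (j : ℤ) : ℝ :=
  ∑ a ∈ range n, chooseZ a j * alternatingPowSum ℝ n (a + 1) / 2 ^ (a + 1)

theorem tanSum_eq_sum_range_succ (n : ℕ) (j : ℤ) :
    tanSum n j =
      ∑ a ∈ range (n + 1), chooseZ a j * alternatingPowSum ℝ n (a + 1) / 2 ^ (a + 1) := by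
  rw [sum_range_succ, alternatingPowSum_eq_zero_of_lt n.lt_succ_self, mul_zero, zero_div,
    add_zero, tanSum]

theorem tanSum_of_neg (n : ℕ) {j : ℤ} (hj : j < 0) : tanSum n j = 0 :=
  sum_eq_zero fun a _ => by rw [chooseZ_of_neg a hj, zero_mul, zero_div]

theorem tanSum_eq_zero_of_le {n : ℕ} {j : ℤ} (h : (n : ℤ) ≤ j) : tanSum n j = 0 :=
  sum_eq_zero fun a ha => by
    rw [chooseZ_of_lt (by have := mem_range.mp ha; omega), zero_mul, zero_div]

theorem tanSum_one (j : ℤ) : tanSum 1 j = -chooseZ 0 j / 2 := by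
  simp [tanSum, alternatingPowSum, sum_range_succ]

theorem two_mul_tanSum_succ {n : ℕ} (hn : n ≠ 0) (j : ℤ) :
    2 * tanSum (n + 1) j = (j + 1) * (tanSum n (j + 1) - tanSum n (j - 1)) := by
  set F : ℕ → ℝ := fun a => (a + 1) * chooseZ a j * alternatingPowSum ℝ n a / 2 ^ a
  have hterm (a : ℕ) :
      2 * (chooseZ a j * alternatingPowSum ℝ (n + 1) (a + 1) / 2 ^ (a + 1)) -
        (j + 1) * (chooseZ a (j + 1) * alternatingPowSum ℝ n (a + 1) / 2 ^ (a + 1) -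
          chooseZ a (j - 1) * alternatingPowSum ℝ n (a + 1) / 2 ^ (a + 1)) =
        F (a + 1) - F a := by
    simp only [F, alternatingPowSum_succ_succ, pow_succ]
    push_cast
    linear_combination
      (-alternatingPowSum ℝ n (a + 1) / (2 ^ a * 2)) * add_two_mul_chooseZ_succ a j
  have hF0 : F 0 = 0 := by simp [F, alternatingPowSum_zero_right hn]
  have hFn : F (n + 1) = 0 := by simp [F, alternatingPowSum_eq_zero_of_lt n.lt_succ_self]
  rw [tanSum, tanSum_eq_sum_range_succ, tanSum_eq_sum_range_succ, ← sum_sub_distrib, mul_sum,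
    mul_sum, ← sub_eq_zero, ← sum_sub_distrib]
  simp only [hterm]
  rw [sum_range_sub, hFn, hF0, sub_zero]

theorem sum_Icc_eq_tanSum {n : ℕ} (hn : n ≠ 0) (k : ℕ) :
    ∑ α ∈ Icc k n, ∑ β ∈ Icc 1 α,
      (-1 : ℝ) ^ β * chooseZ (α - 1) ((k : ℤ) - 1) * (α.choose β : ℝ) * (β : ℝ) ^ n / 2 ^ α =
        tanSum n (k - 1) := by
  set f : ℕ → ℝ := fun α => chooseZ (α - 1) ((k : ℤ) - 1) * alternatingPowSum ℝ n α / 2 ^ α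
  have hinner (α : ℕ) : ∑ β ∈ Icc 1 α, (-1 : ℝ) ^ β * chooseZ (α - 1) ((k : ℤ) - 1) *
      (α.choose β : ℝ) * (β : ℝ) ^ n / 2 ^ α = f α := by
    simp only [f, alternatingPowSum_eq_sum_Icc hn, mul_sum, sum_div]
    exact sum_congr rfl fun β _ => by ring
  have hf0 : f 0 = 0 := by simp [f, alternatingPowSum_zero_right hn]
  simp only [hinner]
  rw [sum_subset (s₂ := range (n + 1)), sum_range_succ', hf0, add_zero]
  · simp [f, tanSum]
  · intro α hα
    simp only [mem_Icc, mem_range] at hα ⊢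
    omega
  · intro α hα hαk
    simp only [mem_Icc, mem_range] at hα hαk
    rcases α with _ | a
    · exact hf0
    · simp [f, chooseZ_of_lt (by omega : (a : ℤ) < k - 1)]

theorem hasDerivAt_tan_pow {x : ℝ} (hx : cos x ≠ 0) (k : ℕ) :
    HasDerivAt (fun t => tan t ^ k) (k * tan x ^ (k - 1) + k * tan x ^ (k + 1)) x := by
  refine ((hasDerivAt_tan hx).pow k).congr_deriv ?_
  rw [one_div, ← inv_one_add_tan_sq hx, inv_inv]
  rcases k with _ | k
  · simp
  · simp only [Nat.add_sub_cancel]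
    ring

theorem iteratedDeriv_succ_tan_pow {x : ℝ} (hx : cos x ≠ 0) (n k : ℕ) :
    iteratedDeriv (n + 1) (fun t => tan t ^ k) x =
      k * iteratedDeriv n (fun t => tan t ^ (k - 1)) x +
        k * iteratedDeriv n (fun t => tan t ^ (k + 1)) x := by
  have hderiv : deriv (fun t => tan t ^ k) =ᶠ[𝓝 x]
      fun t => k * tan t ^ (k - 1) + k * tan t ^ (k + 1) := by
    filter_upwards [continuous_cos.continuousAt.eventually_ne hx] with t ht
    exact (hasDerivAt_tan_pow ht k).deriv
  have hsmooth (m : ℕ) : ContDiffAt ℝ n (fun t => tan t ^ m) x :=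
    (contDiffAt_tan.mpr hx).pow m
  rw [iteratedDeriv_succ', hderiv.iteratedDeriv_eq,
    iteratedDeriv_fun_add (contDiffAt_const.mul (hsmooth _)) (contDiffAt_const.mul (hsmooth _)),
    iteratedDeriv_const_mul _ (hsmooth _), iteratedDeriv_const_mul _ (hsmooth _)]

def tanSign (n k : ℕ) : ℝ := (-1) ^ ((n - k) / 2) * (-1) ^ n

theorem tanSign_succ_succ (n k : ℕ) : tanSign (n + 1) (k + 1) = -tanSign n k := by
  rw [tanSign, tanSign, Nat.add_sub_add_right, pow_succ]
  ring

theorem tanSign_add_two {n k : ℕ} (h : k + 2 ≤ n) : tanSign n (k + 2) = -tanSign n k := by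
  rw [tanSign, tanSign, show (n - k) / 2 = (n - (k + 2)) / 2 + 1 by omega, pow_succ]
  ring

theorem iteratedDeriv_tan_pow_zero {n : ℕ} (hn : n ≠ 0) (k : ℕ) :
    iteratedDeriv n (fun t => tan t ^ k) 0 = tanSign n k * 2 ^ n * tanSum n (k - 1) := by
  have hcos : cos 0 ≠ 0 := by simp
  induction n, Nat.one_le_iff_ne_zero.mpr hn using Nat.le_induction generalizing k with
  | base =>
    rw [iteratedDeriv_succ_tan_pow hcos, tanSum_one]
    rcases k with _ | _ | m
    · simp [chooseZ_of_neg]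
    · norm_num [tanSign, chooseZ]
    · simp [chooseZ_of_lt]
  | succ n hn ih =>
    rcases k with _ | m
    · rw [iteratedDeriv_succ_tan_pow hcos]
      simp [tanSum_of_neg]
    rw [iteratedDeriv_succ_tan_pow hcos, Nat.add_sub_cancel, ih (by omega), ih (by omega),
      tanSign_succ_succ, show m + 1 + 1 = m + 2 from rfl,
      show ((m + 2 : ℕ) : ℤ) - 1 = m + 1 by push_cast; ring,
      show ((m + 1 : ℕ) : ℤ) - 1 = m by push_cast; ring]
    have hrec := two_mul_tanSum_succ (by omega : n ≠ 0) m
    -- For `n < m + 2` the truncated `n - k` breaks the sign pattern, but then the sum vanishes.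
    have hsign : tanSign n (m + 2) * tanSum n (m + 1) = -tanSign n m * tanSum n (m + 1) := by
      by_cases h : m + 2 ≤ n
      · rw [tanSign_add_two h]
      · rw [tanSum_eq_zero_of_le (by omega), mul_zero, mul_zero]
    push_cast at hrec ⊢
    linear_combination (m + 1) * 2 ^ n * hsign + tanSign n m * 2 ^ n * hrec

theorem stmt14 (n k : ℕ) (hn : 1 ≤ n) :
    T n k = (-1 : ℝ) ^ ((n - k) / 2) * (-1 : ℝ) ^ n *
      ((2 : ℝ) ^ n / (k.factorial : ℝ)) *
      ∑ α ∈ Finset.Icc k n, ∑ β ∈ Finset.Icc 1 α,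
        (-1 : ℝ) ^ β * chooseZ (α - 1) ((k : ℤ) - 1) * (α.choose β : ℝ) *
          (β : ℝ) ^ n / 2 ^ α := by
  have hn0 : n ≠ 0 := Nat.one_le_iff_ne_zero.mp hn
  rw [T, iteratedDeriv_tan_pow_zero hn0, sum_Icc_eq_tanSum hn0, tanSign]
  ring
end

section
/- For all n ≥ 1 and k ≥ 0 with n ≡ k (mod 2), T(n,k) = (−1)^{(n−k)/2} · (−1)^n · Σ_{α=k}^{n} (−1)^α · 2^{n−α} · S2(n,α) · C(α−1, k−1) · α!/k!, where S2(n,α) are the Stirling numbers of the second kind. -/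
open Real Finset

/-- Stirling numbers of the second kind. -/
noncomputable def stirling2 (n k : ℕ) : ℝ :=
  (1 / (k.factorial : ℝ)) *
    ∑ j ∈ Finset.range (k + 1), (-1 : ℝ) ^ (k - j) * (k.choose j : ℝ) * (j : ℝ) ^ n

/-!
Differentiating `tan t ^ (k + 1)` with `tan' = 1 + tan ^ 2` gives the recurrence
`T (n + 1) (k + 1) = T n k + (k + 1) (k + 2) T n (k + 2)`, with `T 0 k = [k = 0]`.
Writing the right-hand side as `Σ_α (-1)^α 2^(n-α) S2(n,α) L(α,k)` with the Lah numbers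
`L(α,k) = C(α-1,k-1) α!/k!`, it satisfies the same recurrence up to the sign
`(-1)^((n-k)/2) (-1)^n`. This comes from the Stirling recurrence
`S2(n+1,α+1) = (α+1) S2(n,α+1) + S2(n,α)` together with two identities for Lah numbers,
`L(α+1,k+1) = (α+k+1) L(α,k+1) + L(α,k)` and `k (k+1) L(α,k+1) = (α-k) L(α,k)`,
which combine into `2α L(α,k+1) - L(α+1,k+1) + L(α,k) = (k+1)(k+2) L(α,k+2)`.
-/

lemma cast_choose_succ_right_mul {R : Type*} [Ring R] (m k : ℕ) :
    (m.choose (k + 1) : R) * (k + 1) = m.choose k * ((m : R) - k) := by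
  rcases le_or_gt k m with hkm | hmk
  · have h := congrArg (Nat.cast : ℕ → R) (Nat.choose_succ_right_eq m k)
    push_cast [Nat.cast_sub hkm] at h
    exact h
  · simp [Nat.choose_eq_zero_of_lt hmk, Nat.choose_eq_zero_of_lt (hmk.trans (Nat.lt_succ_self k))]

lemma stirling2_zero_succ (k : ℕ) : stirling2 0 (k + 1) = 0 := by
  have h := add_pow (1 : ℝ) (-1) (k + 1)
  simp only [one_pow, one_mul, add_neg_cancel, zero_pow k.succ_ne_zero] at h
  simp [stirling2, ← h]

lemma stirling2_succ_zero (n : ℕ) : stirling2 (n + 1) 0 = 0 := by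
  simp [stirling2]

lemma neg_one_pow_mul_choose_succ (k j : ℕ) :
    (-1 : ℝ) ^ (k + 1 - j) * ((k + 1).choose j) * ((j : ℝ) - (k + 1)) =
      (k + 1) * ((-1) ^ (k - j) * k.choose j) := by
  rcases lt_trichotomy j (k + 1) with hj | rfl | hj
  · have hc := congrArg (Nat.cast : ℕ → ℝ) (Nat.choose_mul_succ_eq k j)
    push_cast [Nat.cast_sub hj.le] at hc
    rw [Nat.sub_add_comm (Nat.lt_succ_iff.mp hj), pow_succ]
    linear_combination -(-1 : ℝ) ^ (k - j) * hc
  · simp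
  · simp [Nat.choose_eq_zero_of_lt hj, Nat.choose_eq_zero_of_lt (hj.trans' (Nat.lt_succ_self k))]

lemma stirling2_succ_succ (n k : ℕ) :
    stirling2 (n + 1) (k + 1) = (k + 1) * stirling2 n (k + 1) + stirling2 n k := by
  have key :
      ∑ j ∈ range (k + 2), (-1 : ℝ) ^ (k + 1 - j) * ((k + 1).choose j) * (j : ℝ) ^ (n + 1)
        - (k + 1) * ∑ j ∈ range (k + 2), (-1 : ℝ) ^ (k + 1 - j) * ((k + 1).choose j) * (j : ℝ) ^ n
      = (k + 1) * ∑ j ∈ range (k + 1), (-1 : ℝ) ^ (k - j) * (k.choose j) * (j : ℝ) ^ n := by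
    rw [mul_sum, mul_sum, ← sum_sub_distrib, sum_range_succ _ (k + 1), Nat.sub_self,
      Nat.choose_self, add_eq_left.mpr (by push_cast; ring)]
    exact sum_congr rfl fun j _ => by
      linear_combination (j : ℝ) ^ n * neg_one_pow_mul_choose_succ k j
  have hk : ((k + 1).factorial : ℝ) = (k + 1) * k.factorial := by
    push_cast [Nat.factorial_succ]
    ring
  simp only [stirling2, hk]
  field_simp
  linear_combination key

lemma stirling2_eq_stirlingSecond (n k : ℕ) : stirling2 n k = Nat.stirlingSecond n k := by
  induction n generalizing k with
  | zero =>
    cases k with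
    | zero => simp [stirling2]
    | succ k => simp [stirling2_zero_succ]
  | succ n ih =>
    cases k with
    | zero => simp [stirling2_succ_zero]
    | succ k => rw [stirling2_succ_succ, ih, ih, Nat.stirlingSecond_succ_succ]; push_cast; ring

-- `lah 0 0 = 1`, where the `chooseZ` form of `lah_eq_chooseZ` gives `0`, so that
-- `lah_succ_succ` and `lah_succ_right` hold for all indices.
noncomputable def lah : ℕ → ℕ → ℝ
  | 0, 0 => 1
  | 0, _ + 1 => 0
  | _ + 1, 0 => 0
  | n + 1, k + 1 => n.choose k * (n + 1).factorial / (k + 1).factorial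

lemma lah_eq_zero_of_lt {n k : ℕ} (h : n < k) : lah n k = 0 := by
  match n, k with
  | 0, _ + 1 => rfl
  | n + 1, k + 1 => simp [lah, Nat.choose_eq_zero_of_lt (Nat.succ_lt_succ_iff.mp h)]

lemma lah_eq_chooseZ {α : ℕ} (hα : α ≠ 0) (k : ℕ) :
    lah α k = chooseZ (α - 1) ((k : ℤ) - 1) * α.factorial / k.factorial := by
  obtain ⟨a, rfl⟩ := Nat.exists_eq_succ_of_ne_zero hα
  cases k with
  | zero => simp [lah, chooseZ]
  | succ k => simp [lah, chooseZ]

lemma lah_succ_succ (n k : ℕ) : lah (n + 1) (k + 1) = (n + k + 1) * lah n (k + 1) + lah n k := by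
  match n, k with
  | 0, 0 => simp [lah]
  | 0, k + 1 => simp [lah]
  | m + 1, 0 => simp [lah, Nat.factorial_succ (m + 1)]
  | m + 1, j + 1 =>
    simp only [lah]
    rw [Nat.choose_succ_succ', Nat.factorial_succ (m + 1), Nat.factorial_succ (j + 1)]
    push_cast
    field_simp
    linear_combination -cast_choose_succ_right_mul (R := ℝ) m j

lemma lah_succ_right (n k : ℕ) : k * (k + 1) * lah n (k + 1) = (n - k) * lah n k := by
  match n, k with
  | 0, 0 => simp
  | 0, k + 1 => simp [lah]
  | m + 1, 0 => simp [lah]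
  | m + 1, j + 1 =>
    simp only [lah]
    rw [Nat.factorial_succ (j + 1)]
    push_cast
    field_simp
    linear_combination cast_choose_succ_right_mul (R := ℝ) m j

lemma lah_combination (α k : ℕ) :
    2 * α * lah α (k + 1) - lah (α + 1) (k + 1) + lah α k =
      (k + 1) * (k + 2) * lah α (k + 2) := by
  have h : ((k : ℝ) + 1) * (k + 2) * lah α (k + 2) = (α - (k + 1)) * lah α (k + 1) := by
    convert lah_succ_right α (k + 1) using 2 <;> push_cast <;> ring
  linear_combination -lah_succ_succ α k - h

noncomputable def stirlingWeight (n α : ℕ) : ℝ := (-1) ^ α * 2 ^ (n - α) * stirling2 n α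

lemma stirlingWeight_succ_succ (n α : ℕ) :
    stirlingWeight (n + 1) (α + 1) =
      2 * (α + 1) * stirlingWeight n (α + 1) - stirlingWeight n α := by
  have h : (2 : ℝ) ^ (n - α) * stirling2 n (α + 1) =
      2 * 2 ^ (n - (α + 1)) * stirling2 n (α + 1) := by
    rcases lt_or_ge α n with hαn | hαn
    · rw [show n - α = n - (α + 1) + 1 by omega, pow_succ']
    · rw [stirling2_eq_stirlingSecond n (α + 1), Nat.stirlingSecond_eq_zero_of_lt (by omega)]
      simp
  simp only [stirlingWeight, stirling2_succ_succ, Nat.add_sub_add_right, pow_succ]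
  linear_combination (-1 : ℝ) ^ α * (-(α : ℝ) - 1) * h

lemma stirlingWeight_succ_zero (n : ℕ) : stirlingWeight (n + 1) 0 = 0 := by
  simp [stirlingWeight, stirling2_succ_zero]

lemma stirlingWeight_self_succ (n : ℕ) : stirlingWeight n (n + 1) = 0 := by
  simp [stirlingWeight, stirling2_eq_stirlingSecond, Nat.stirlingSecond_eq_zero_of_lt]

noncomputable def lahSum (n k : ℕ) : ℝ :=
  ∑ α ∈ range (n + 1), stirlingWeight n α * lah α k

lemma lahSum_zero_left (k : ℕ) : lahSum 0 k = lah 0 k := by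
  simp [lahSum, stirlingWeight, stirling2]

lemma lahSum_succ_zero (n : ℕ) : lahSum (n + 1) 0 = 0 := by
  rw [lahSum, sum_range_succ', stirlingWeight_succ_zero, zero_mul, add_zero]
  exact sum_eq_zero fun α _ => by simp [lah]

lemma lahSum_eq_zero_of_lt {n k : ℕ} (h : n < k) : lahSum n k = 0 :=
  sum_eq_zero fun α hα => by
    rw [lah_eq_zero_of_lt (by have := mem_range.mp hα; omega), mul_zero]

lemma lahSum_succ_succ (n k : ℕ) :
    lahSum (n + 1) (k + 1) = (k + 1) * (k + 2) * lahSum n (k + 2) - lahSum n k := by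
  set g : ℕ → ℝ := fun α => 2 * α * stirlingWeight n α * lah α (k + 1) with hg
  have hshift : ∑ α ∈ range (n + 1), g (α + 1) = ∑ α ∈ range (n + 1), g α := by
    have h := (sum_range_succ' g (n + 1)).symm.trans (sum_range_succ g (n + 1))
    simpa [g, stirlingWeight_self_succ] using h
  calc lahSum (n + 1) (k + 1)
      = ∑ α ∈ range (n + 1), stirlingWeight (n + 1) (α + 1) * lah (α + 1) (k + 1) := by
        rw [lahSum, sum_range_succ', lah_eq_zero_of_lt k.succ_pos, mul_zero, add_zero]
    _ = ∑ α ∈ range (n + 1), g (α + 1)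
          - ∑ α ∈ range (n + 1), stirlingWeight n α * lah (α + 1) (k + 1) := by
        rw [← sum_sub_distrib]
        refine sum_congr rfl fun α _ => ?_
        rw [stirlingWeight_succ_succ, hg]
        push_cast
        ring
    _ = ∑ α ∈ range (n + 1),
          stirlingWeight n α * (2 * α * lah α (k + 1) - lah (α + 1) (k + 1)) := by
        rw [hshift, ← sum_sub_distrib]
        exact sum_congr rfl fun α _ => by ring
    _ = (k + 1) * (k + 2) * lahSum n (k + 2) - lahSum n k := by
        rw [lahSum, lahSum, mul_sum, ← sum_sub_distrib]
        refine sum_congr rfl fun α _ => ?_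
        linear_combination stirlingWeight n α * lah_combination α k

open Topology in
lemma iteratedDeriv_tan_pow_succ {x : ℝ} (hx : cos x ≠ 0) (n k : ℕ) :
    iteratedDeriv (n + 1) (fun t => tan t ^ (k + 1)) x =
      (k + 1) * (iteratedDeriv n (fun t => tan t ^ k) x
        + iteratedDeriv n (fun t => tan t ^ (k + 2)) x) := by
  have hderiv : deriv (fun t => tan t ^ (k + 1)) =ᶠ[𝓝 x]
      fun t => (k + 1) * (tan t ^ k + tan t ^ (k + 2)) := by
    filter_upwards [continuous_cos.continuousAt.eventually_ne hx] with y hy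
    rw [((hasDerivAt_tan hy).fun_pow (k + 1)).deriv, one_div, ← inv_one_add_tan_sq hy, inv_inv]
    push_cast
    ring
  have hsmooth (m : ℕ) : ContDiffAt ℝ n (fun t => tan t ^ m) x := (contDiffAt_tan.2 hx).pow m
  rw [iteratedDeriv_succ', hderiv.iteratedDeriv_eq, iteratedDeriv_const_mul_field,
    iteratedDeriv_fun_add (hsmooth k) (hsmooth (k + 2))]

lemma T_zero_left (k : ℕ) : T 0 k = lah 0 k := by
  cases k <;> simp [T, lah]

lemma T_succ_zero (n : ℕ) : T (n + 1) 0 = 0 := by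
  simp [T, iteratedDeriv_const]

lemma T_succ_succ (n k : ℕ) : T (n + 1) (k + 1) = T n k + (k + 1) * (k + 2) * T n (k + 2) := by
  simp only [T, iteratedDeriv_tan_pow_succ (x := 0) (by simp), Nat.factorial_succ]
  push_cast
  field_simp
  ring

theorem T_eq_lahSum (n k : ℕ) (hpar : n % 2 = k % 2) :
    T n k = (-1) ^ ((n - k) / 2) * (-1) ^ n * lahSum n k := by
  induction n generalizing k with
  | zero => simp [T_zero_left, lahSum_zero_left]
  | succ n ih =>
    cases k with
    | zero => simp [T_succ_zero, lahSum_succ_zero]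
    | succ k =>
      have hsign : (-1 : ℝ) ^ ((n - (k + 2)) / 2) * lahSum n (k + 2)
          = -(-1) ^ ((n - k) / 2) * lahSum n (k + 2) := by
        rcases lt_or_ge n (k + 2) with h | h
        · simp [lahSum_eq_zero_of_lt h]
        · rw [show (n - k) / 2 = (n - (k + 2)) / 2 + 1 by omega, pow_succ]
          ring
      rw [T_succ_succ, ih k (by omega), ih (k + 2) (by omega), lahSum_succ_succ,
        Nat.add_sub_add_right]
      linear_combination ((k + 1) * (k + 2) * (-1 : ℝ) ^ n) * hsign

lemma lahSum_eq_sum_Icc {n : ℕ} (hn : 1 ≤ n) (k : ℕ) :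
    lahSum n k = ∑ α ∈ Icc k n, (-1 : ℝ) ^ α * (2 : ℝ) ^ (n - α) * stirling2 n α *
      chooseZ (α - 1) ((k : ℤ) - 1) * (α.factorial : ℝ) / (k.factorial : ℝ) := by
  obtain ⟨m, rfl⟩ := Nat.exists_eq_add_of_le' hn
  have hsub : Icc k (m + 1) ⊆ range (m + 2) := fun α hα => by
    simp only [mem_Icc, mem_range] at hα ⊢
    omega
  rw [lahSum, ← sum_subset hsub fun α hrange hα => ?_]
  · refine sum_congr rfl fun α _ => ?_
    rcases eq_or_ne α 0 with rfl | hα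
    · simp [stirlingWeight_succ_zero, stirling2_succ_zero]
    · rw [lah_eq_chooseZ hα, stirlingWeight]
      ring
  · simp only [mem_Icc, mem_range, not_and, not_le] at hrange hα
    rw [lah_eq_zero_of_lt (by omega), mul_zero]

theorem stmt15 (n k : ℕ) (hn : 1 ≤ n) (hpar : n % 2 = k % 2) :
    T n k = (-1 : ℝ) ^ ((n - k) / 2) * (-1 : ℝ) ^ n *
      ∑ α ∈ Finset.Icc k n,
        (-1 : ℝ) ^ α * (2 : ℝ) ^ (n - α) * stirling2 n α *
          chooseZ (α - 1) ((k : ℤ) - 1) * (α.factorial : ℝ) / (k.factorial : ℝ) := by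
  rw [T_eq_lahSum n k hpar, lahSum_eq_sum_Icc hn]
end

section
/- For every n ≥ 0 and every x with |x| < π/2, the n-th derivative of tan at x equals T(n,1) + Σ_{k=1}^{n+1} (k−1)! · T(n+1, k) · tan(x)^k, where T(n,k) are the higher-order tangent numbers. -/
/-! Since tan' = 1 + tan², differentiating p(tan t) gives ((1 + X²) p')(tan t). So where cos ≠ 0
the n-th derivative of p ∘ tan is (Dⁿ p) ∘ tan with D p = (1 + X²) p'; in particular
tan⁽ⁿ⁾ = (Dⁿ X)(tan) and k! T(m, k) = (Dᵐ Xᵏ)(0). Because D Xᵏ = k (Xᵏ⁻¹ + Xᵏ⁺¹) and the j-th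
coefficient of D p is (j + 1) p_{j+1} + (j - 1) p_{j-1}, the numbers (Dⁿ⁺¹ Xᵏ)(0) and k · [Xᵏ] Dⁿ X
obey the same recursion in n, so (k - 1)! T(n + 1, k) is the k-th coefficient of Dⁿ X. -/

open Real Finset

open Polynomial

noncomputable def tanDeriv (R : Type*) [CommSemiring R] : R[X] →ₗ[R] R[X] :=
  LinearMap.mulLeft R (1 + X ^ 2) ∘ₗ derivative

section
variable {R : Type*} [CommSemiring R]

theorem tanDeriv_apply (p : R[X]) : tanDeriv R p = (1 + X ^ 2) * derivative p := rfl

-- For `j = 0` the truncated `j - 1` makes the second term `0 * p.coeff 0`.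
theorem coeff_tanDeriv (p : R[X]) (j : ℕ) :
    (tanDeriv R p).coeff j = (j + 1) * p.coeff (j + 1) + ((j - 1 : ℕ) : R) * p.coeff (j - 1) := by
  rw [tanDeriv_apply, add_mul, one_mul, coeff_add, coeff_X_pow_mul', coeff_derivative]
  rcases j with _ | _ | j
  · simp
  · simp [mul_comm]
  · simp only [le_add_iff_nonneg_left, zero_le, if_true, coeff_derivative]
    simp only [Nat.add_sub_cancel, show j + 2 - 2 = j by omega]
    push_cast; ring

theorem natDegree_tanDeriv_le (p : R[X]) : (tanDeriv R p).natDegree ≤ p.natDegree + 1 := by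
  refine natDegree_le_iff_coeff_eq_zero.2 fun j hj => ?_
  rw [coeff_tanDeriv, coeff_eq_zero_of_natDegree_lt (by omega),
    coeff_eq_zero_of_natDegree_lt (by omega), mul_zero, mul_zero, add_zero]

theorem natDegree_tanDeriv_pow_X_le (n : ℕ) : ((tanDeriv R ^ n) X).natDegree ≤ n + 1 := by
  induction n with
  | zero => simpa using natDegree_X_le
  | succ n ih =>
    rw [pow_succ', Module.End.mul_apply]
    exact (natDegree_tanDeriv_le _).trans (by omega)

theorem tanDeriv_X_pow (k : ℕ) : tanDeriv R (X ^ k) = (k : R) • (X ^ (k - 1) + X ^ (k + 1)) := by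
  rcases k with _ | k
  · simp [tanDeriv_apply]
  · rw [tanDeriv_apply, derivative_X_pow, smul_eq_C_mul]
    simp only [Nat.add_sub_cancel]
    ring

theorem coeff_zero_tanDeriv_pow_succ_X_pow (n k : ℕ) :
    ((tanDeriv R ^ (n + 1)) (X ^ k)).coeff 0 = k * ((tanDeriv R ^ n) X).coeff k := by
  induction n generalizing k with
  | zero =>
    rw [pow_one, coeff_tanDeriv, pow_zero, Module.End.one_apply, coeff_X_pow, coeff_X]
    rcases k with _ | _ | k <;> simp
  | succ n ih =>
    rw [pow_succ, Module.End.mul_apply, tanDeriv_X_pow, map_smul, map_add, coeff_smul, coeff_add,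
      ih, ih, pow_succ', Module.End.mul_apply _ _ X, coeff_tanDeriv, smul_eq_mul]
    push_cast; ring
end

theorem hasDerivAt_eval_tan (p : ℝ[X]) {x : ℝ} (hx : cos x ≠ 0) :
    HasDerivAt (fun t => p.eval (tan t)) ((tanDeriv ℝ p).eval (tan x)) x := by
  refine ((p.hasDerivAt (tan x)).comp x (hasDerivAt_tan hx)).congr_deriv ?_
  rw [tanDeriv_apply, eval_mul, mul_comm, ← inv_one_add_tan_sq hx]
  simp

theorem iteratedDeriv_eval_tan (p : ℝ[X]) (n : ℕ) {x : ℝ} (hx : cos x ≠ 0) :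
    iteratedDeriv n (fun t => p.eval (tan t)) x = ((tanDeriv ℝ ^ n) p).eval (tan x) := by
  induction n generalizing p with
  | zero => simp
  | succ n ih =>
    have hderiv : deriv (fun t => p.eval (tan t)) =ᶠ[nhds x] fun t => (tanDeriv ℝ p).eval (tan t) :=
      (continuous_cos.continuousAt.eventually_ne hx).mono fun y hy => (hasDerivAt_eval_tan p hy).deriv
    rw [iteratedDeriv_succ', hderiv.iteratedDeriv_eq, ih, pow_succ, Module.End.mul_apply]

theorem T_eq_coeff_zero (n k : ℕ) : T n k = ((tanDeriv ℝ ^ n) (X ^ k)).coeff 0 / k.factorial := by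
  have h := iteratedDeriv_eval_tan (X ^ k) n (x := 0) (by simp)
  simp only [eval_pow, eval_X, tan_zero] at h
  rw [T, h, coeff_zero_eq_eval_zero]

theorem T_one (n : ℕ) : T n 1 = ((tanDeriv ℝ ^ n) X).coeff 0 := by
  simp [T_eq_coeff_zero]

theorem factorial_pred_mul_T_succ (n : ℕ) {k : ℕ} (hk : k ≠ 0) :
    ((k - 1).factorial : ℝ) * T (n + 1) k = ((tanDeriv ℝ ^ n) X).coeff k := by
  rw [T_eq_coeff_zero, coeff_zero_tanDeriv_pow_succ_X_pow, ← Nat.mul_factorial_pred hk]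
  push_cast
  field_simp

theorem stmt17 (n : ℕ) (x : ℝ) (hx : |x| < Real.pi / 2) :
    iteratedDeriv n Real.tan x =
      T n 1 + ∑ k ∈ Finset.Icc 1 (n + 1),
        ((k - 1).factorial : ℝ) * T (n + 1) k * Real.tan x ^ k := by
  have hcos : cos x ≠ 0 := (cos_pos_of_mem_Ioo (abs_lt.1 hx)).ne'
  set P := (tanDeriv ℝ ^ n) X
  calc iteratedDeriv n tan x = P.eval (tan x) := by simpa using iteratedDeriv_eval_tan X n hcos
    _ = ∑ k ∈ range (n + 2), P.coeff k * tan x ^ k :=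
      eval_eq_sum_range' (Nat.lt_succ_of_le (natDegree_tanDeriv_pow_X_le n)) _
    _ = P.coeff 0 + ∑ k ∈ Icc 1 (n + 1), P.coeff k * tan x ^ k := by
      rw [range_eq_Ico, sum_eq_sum_Ico_succ_bot (by omega), ← Ico_add_one_right_eq_Icc, pow_zero,
        mul_one, zero_add]
      rfl
    _ = _ := by
      rw [T_one]
      congr 1
      refine sum_congr rfl fun k hk => ?_
      rw [factorial_pred_mul_T_succ n (by simp at hk; omega)]
end

section
/- For every n ≥ 0 and every x with |x| < π/2, the n-th derivative of sec at x equals sec(x) · Σ_{k=0}^{n} k! · S(n,k) · tan(x)^k, where S(n,k) are the higher-order secant numbers. -/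
/-! Put `f k = tan ^ k / cos`. From `tan' = 1 + tan ^ 2` and `sec' = sec * tan` one gets
`(f k)' = k * f (k - 1) + (k + 1) * f (k + 1)`, so the `n`-th derivative of `sec = f 0` is
`∑ k, a n k * f k` for numbers `a n k` produced by the tridiagonal matrix of this recursion.
That matrix is symmetric, so `a (n + 1) k = (k + 1) * a n (k + 1) + k * a n (k - 1)`, which is
also the recursion satisfied by `(f k)⁽ⁿ⁾ 0` since `f j 0 = if j = 0 then 1 else 0`.
Hence `a n k = (f k)⁽ⁿ⁾ 0 = k! * S n k`. -/

open Real Finset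

open Topology

noncomputable def tanPowDivCos (k : ℕ) (t : ℝ) : ℝ := tan t ^ k / cos t

lemma hasDerivAt_tanPowDivCos (k : ℕ) {x : ℝ} (hx : cos x ≠ 0) :
    HasDerivAt (tanPowDivCos k)
      (k * tanPowDivCos (k - 1) x + (k + 1) * tanPowDivCos (k + 1) x) x := by
  have h := ((hasDerivAt_tan hx).fun_pow k).div (hasDerivAt_cos x) hx
  refine h.congr_deriv ?_
  have hsin : sin x = tan x * cos x := by rw [tan_eq_sin_div_cos]; field_simp
  have hsec : 1 / cos x ^ 2 = 1 + tan x ^ 2 := by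
    rw [tan_eq_sin_div_cos]; field_simp; linear_combination -sin_sq_add_cos_sq x
  simp only [tanPowDivCos, hsin, hsec]
  rcases k with _ | m
  · field_simp
    ring
  · simp only [Nat.add_sub_cancel]
    push_cast
    field_simp
    ring

lemma contDiffAt_tanPowDivCos (k : ℕ) {n : WithTop ℕ∞} {x : ℝ} (hx : cos x ≠ 0) :
    ContDiffAt ℝ n (tanPowDivCos k) x :=
  ((contDiffAt_tan.2 hx).pow k).div contDiff_cos.contDiffAt hx

lemma isOpen_cos_ne_zero : IsOpen {x : ℝ | cos x ≠ 0} :=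
  isOpen_compl_singleton.preimage continuous_cos

lemma deriv_tanPowDivCos_eventuallyEq (k : ℕ) {x : ℝ} (hx : cos x ≠ 0) :
    deriv (tanPowDivCos k) =ᶠ[𝓝 x]
      fun y => k * tanPowDivCos (k - 1) y + (k + 1) * tanPowDivCos (k + 1) y := by
  filter_upwards [isOpen_cos_ne_zero.mem_nhds hx] with y hy
  exact (hasDerivAt_tanPowDivCos k hy).deriv

noncomputable def secTanCoeff : ℕ → ℕ → ℝ
  | 0, k => if k = 0 then 1 else 0
  | n + 1, k => (k + 1) * secTanCoeff n (k + 1) + k * secTanCoeff n (k - 1)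

lemma secTanCoeff_succ (n k : ℕ) :
    secTanCoeff (n + 1) k = (k + 1) * secTanCoeff n (k + 1) + k * secTanCoeff n (k - 1) :=
  rfl

lemma secTanCoeff_eq_zero_of_lt {n k : ℕ} (h : n < k) : secTanCoeff n k = 0 := by
  induction n generalizing k with
  | zero => simp [secTanCoeff, h.ne']
  | succ n ih => rw [secTanCoeff_succ, ih (by omega), ih (by omega)]; ring

lemma iteratedDeriv_tanPowDivCos_zero (n k : ℕ) :
    iteratedDeriv n (tanPowDivCos k) 0 = secTanCoeff n k := by
  induction n generalizing k with
  | zero => rcases k with _ | k <;> simp [tanPowDivCos, secTanCoeff]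
  | succ n ih =>
    have h0 : cos (0 : ℝ) ≠ 0 := by simp
    rw [iteratedDeriv_succ', (deriv_tanPowDivCos_eventuallyEq k h0).iteratedDeriv_eq n,
      iteratedDeriv_fun_add (contDiffAt_const.mul (contDiffAt_tanPowDivCos _ h0))
        (contDiffAt_const.mul (contDiffAt_tanPowDivCos _ h0)),
      iteratedDeriv_const_mul_field, iteratedDeriv_const_mul_field, ih, ih, secTanCoeff_succ]
    ring

lemma sum_secTanCoeff_mul_ladder (n : ℕ) (F : ℕ → ℝ) :
    ∑ j ∈ range (n + 1), secTanCoeff n j * (j * F (j - 1) + (j + 1) * F (j + 1)) =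
      ∑ k ∈ range (n + 2), secTanCoeff (n + 1) k * F k := by
  have hdown : ∑ j ∈ range (n + 1), secTanCoeff n j * (j * F (j - 1)) =
      ∑ k ∈ range (n + 2), (k + 1) * secTanCoeff n (k + 1) * F k := by
    rw [sum_range_succ', sum_range_succ _ (n + 1), sum_range_succ _ n,
      secTanCoeff_eq_zero_of_lt (by omega : n < n + 1 + 1),
      secTanCoeff_eq_zero_of_lt (by omega : n < n + 1)]
    simp only [Nat.cast_zero, zero_mul, mul_zero, add_zero, Nat.add_sub_cancel, Nat.cast_succ]
    exact sum_congr rfl fun k _ => by ring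
  have hup : ∑ j ∈ range (n + 1), secTanCoeff n j * ((j + 1) * F (j + 1)) =
      ∑ k ∈ range (n + 2), k * secTanCoeff n (k - 1) * F k := by
    rw [sum_range_succ' _ (n + 1)]
    simp only [Nat.cast_zero, zero_mul, add_zero, Nat.add_sub_cancel, Nat.cast_succ]
    exact sum_congr rfl fun k _ => by ring
  have hsucc : ∑ k ∈ range (n + 2), secTanCoeff (n + 1) k * F k =
      ∑ k ∈ range (n + 2),
        ((k + 1) * secTanCoeff n (k + 1) * F k + k * secTanCoeff n (k - 1) * F k) :=
    sum_congr rfl fun k _ => by rw [secTanCoeff_succ]; ring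
  rw [hsucc, sum_add_distrib, ← hdown, ← hup, ← sum_add_distrib]
  exact sum_congr rfl fun j _ => by ring

lemma iteratedDeriv_tanPowDivCos_zero_eq_sum (n : ℕ) {x : ℝ} (hx : cos x ≠ 0) :
    iteratedDeriv n (tanPowDivCos 0) x =
      ∑ k ∈ range (n + 1), secTanCoeff n k * tanPowDivCos k x := by
  induction n generalizing x with
  | zero => simp [secTanCoeff]
  | succ n ih =>
    have hev : iteratedDeriv n (tanPowDivCos 0) =ᶠ[𝓝 x]
        fun y => ∑ j ∈ range (n + 1), secTanCoeff n j * tanPowDivCos j y := by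
      filter_upwards [isOpen_cos_ne_zero.mem_nhds hx] with y hy using ih hy
    have hderiv := HasDerivAt.fun_sum fun j (_ : j ∈ range (n + 1)) =>
      (hasDerivAt_tanPowDivCos j hx).const_mul (secTanCoeff n j)
    rw [iteratedDeriv_succ, hev.deriv_eq, hderiv.deriv]
    exact sum_secTanCoeff_mul_ladder n fun k => tanPowDivCos k x

lemma S_eq_secTanCoeff_div_factorial (n k : ℕ) : S n k = secTanCoeff n k / k.factorial := by
  rw [S, ← iteratedDeriv_tanPowDivCos_zero]
  rfl

theorem stmt18 (n : ℕ) (x : ℝ) (hx : |x| < Real.pi / 2) :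
    iteratedDeriv n (fun t : ℝ => 1 / Real.cos t) x =
      (1 / Real.cos x) * ∑ k ∈ Finset.range (n + 1),
        (k.factorial : ℝ) * S n k * Real.tan x ^ k := by
  have hcos : cos x ≠ 0 := (cos_pos_of_mem_Ioo (abs_lt.mp hx)).ne'
  have hsec : (fun t : ℝ => 1 / cos t) = tanPowDivCos 0 := by
    funext t; simp [tanPowDivCos]
  rw [hsec, iteratedDeriv_tanPowDivCos_zero_eq_sum n hcos, mul_sum]
  refine sum_congr rfl fun k _ => ?_
  rw [S_eq_secTanCoeff_div_factorial, tanPowDivCos]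
  field_simp
end

section
/- For every n ≥ 0 and every real x, the n-th derivative of sech at x equals sech(x) · Σ_{k=0}^{n} (−1)^{(n+k)/2} · k! · S(n,k) · tanh(x)^k, where the sum runs over k with n ≡ k (mod 2) (terms with opposite parity vanish since S(n,k) = 0 there). -/
open Real Finset

/-!
Both families `sec · tanᵏ` and `sech · tanhᵏ` are closed under differentiation:
`(sec tanᵏ)' = k sec tanᵏ⁻¹ + (k+1) sec tanᵏ⁺¹` and `(sech tanhᵏ)' = k sech tanhᵏ⁻¹ - (k+1) sech tanhᵏ⁺¹`.
The first shows that `c(n,k) = k! S(n,k)`, the `n`-th derivative of `sec tanᵏ` at `0`, satisfies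
`c(n+1,k) = k c(n,k-1) + (k+1) c(n,k+1)`, and that `c(n,k) = 0` unless `k ≤ n` and `k ≡ n (mod 2)`.
The signed numbers `a(n,k) = (-1)^((n+k)/2) c(n,k)` then satisfy
`a(n+1,k) = (k+1) a(n,k+1) - k a(n,k-1)`, which is exactly what the second identity demands of the
coefficients in `(d/dx)ⁿ sech = Σₖ a(n,k) sech tanhᵏ`; induction on `n` concludes.
-/

namespace Real

lemma one_div_cosh_sq (x : ℝ) : 1 / cosh x ^ 2 = 1 - tanh x ^ 2 := by
  have hc : cosh x ≠ 0 := (cosh_pos x).ne'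
  rw [tanh_eq_sinh_div_cosh]
  field_simp
  linarith [cosh_sq_sub_sinh_sq x]

lemma one_div_cos_sq {x : ℝ} (hx : cos x ≠ 0) : 1 / cos x ^ 2 = 1 + tan x ^ 2 := by
  rw [tan_eq_sin_div_cos]
  field_simp
  linarith [cos_sq_add_sin_sq x]

lemma hasDerivAt_tanh (x : ℝ) : HasDerivAt tanh (1 - tanh x ^ 2) x := by
  have h := (hasDerivAt_sinh x).div (hasDerivAt_cosh x) (cosh_pos x).ne'
  rw [show sinh / cosh = tanh from funext fun y => (tanh_eq_sinh_div_cosh y).symm] at h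
  refine h.congr_deriv ?_
  rw [← one_div_cosh_sq, ← cosh_sq_sub_sinh_sq x]
  ring

lemma hasDerivAt_one_div_cosh (x : ℝ) :
    HasDerivAt (fun t => 1 / cosh t) (-(1 / cosh x * tanh x)) x := by
  have h := (hasDerivAt_cosh x).fun_inv (cosh_pos x).ne'
  simp only [one_div]
  refine h.congr_deriv ?_
  rw [tanh_eq_sinh_div_cosh]
  ring

lemma hasDerivAt_one_div_cos {x : ℝ} (hx : cos x ≠ 0) :
    HasDerivAt (fun t => 1 / cos t) (1 / cos x * tan x) x := by
  have h := (hasDerivAt_cos x).fun_inv hx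
  simp only [one_div]
  refine h.congr_deriv ?_
  rw [tan_eq_sin_div_cos]
  ring

/- At `k = 0` the truncated `k - 1` is harmless: its term carries the factor `k`. -/
lemma hasDerivAt_one_div_cosh_mul_tanh_pow (k : ℕ) (x : ℝ) :
    HasDerivAt (fun t => 1 / cosh t * tanh t ^ k)
      (k * (1 / cosh x * tanh x ^ (k - 1)) - (k + 1) * (1 / cosh x * tanh x ^ (k + 1))) x := by
  refine ((hasDerivAt_one_div_cosh x).mul ((hasDerivAt_tanh x).pow k)).congr_deriv ?_
  rcases k with _ | k
  · simp
  · simp only [Nat.add_sub_cancel, Pi.pow_apply]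
    push_cast
    ring

lemma hasDerivAt_tan_pow_div_cos (k : ℕ) {x : ℝ} (hx : cos x ≠ 0) :
    HasDerivAt (fun t => tan t ^ k / cos t)
      (k * (tan x ^ (k - 1) / cos x) + (k + 1) * (tan x ^ (k + 1) / cos x)) x := by
  simp only [div_eq_mul_one_div (tan _ ^ _)]
  refine (((hasDerivAt_tan hx).pow k).mul (hasDerivAt_one_div_cos hx)).congr_deriv ?_
  rw [one_div_cos_sq hx]
  rcases k with _ | k
  · simp [mul_comm]
  · simp only [Nat.add_sub_cancel, Pi.pow_apply]
    push_cast
    ring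

lemma contDiffAt_tan_pow_div_cos (k : ℕ) {n : WithTop ℕ∞} {x : ℝ} (hx : cos x ≠ 0) :
    ContDiffAt ℝ n (fun t => tan t ^ k / cos t) x :=
  ((contDiffAt_tan.2 hx).pow k).div contDiff_cos.contDiffAt hx

lemma iteratedDeriv_succ_tan_pow_div_cos (n k : ℕ) {x : ℝ} (hx : cos x ≠ 0) :
    iteratedDeriv (n + 1) (fun t => tan t ^ k / cos t) x =
      k * iteratedDeriv n (fun t => tan t ^ (k - 1) / cos t) x +
        (k + 1) * iteratedDeriv n (fun t => tan t ^ (k + 1) / cos t) x := by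
  have hderiv : deriv (fun t => tan t ^ k / cos t) =ᶠ[nhds x]
      fun t => k * (tan t ^ (k - 1) / cos t) + (k + 1) * (tan t ^ (k + 1) / cos t) := by
    filter_upwards [(isOpen_compl_singleton.preimage continuous_cos).mem_nhds hx] with t ht
    exact (hasDerivAt_tan_pow_div_cos k ht).deriv
  rw [iteratedDeriv_succ', hderiv.iteratedDeriv_eq, iteratedDeriv_fun_add
    (contDiffAt_const.mul (contDiffAt_tan_pow_div_cos _ hx))
    (contDiffAt_const.mul (contDiffAt_tan_pow_div_cos _ hx)),
    iteratedDeriv_const_mul_field, iteratedDeriv_const_mul_field]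

end Real

noncomputable def secTanPowCoeff (n k : ℕ) : ℝ :=
  iteratedDeriv n (fun t : ℝ => tan t ^ k / cos t) 0

lemma factorial_mul_S (n k : ℕ) : (k.factorial : ℝ) * S n k = secTanPowCoeff n k :=
  mul_div_cancel₀ _ (Nat.cast_ne_zero.2 k.factorial_ne_zero)

lemma secTanPowCoeff_zero_left (k : ℕ) : secTanPowCoeff 0 k = if k = 0 then 1 else 0 := by
  rcases k with _ | k <;> simp [secTanPowCoeff]

lemma secTanPowCoeff_succ (n k : ℕ) :
    secTanPowCoeff (n + 1) k = k * secTanPowCoeff n (k - 1) + (k + 1) * secTanPowCoeff n (k + 1) :=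
  iteratedDeriv_succ_tan_pow_div_cos n k (by simp)

lemma secTanPowCoeff_eq_zero {n k : ℕ} (h : n < k ∨ n % 2 ≠ k % 2) : secTanPowCoeff n k = 0 := by
  induction n generalizing k with
  | zero => simp [secTanPowCoeff_zero_left, show k ≠ 0 by omega]
  | succ n ih =>
    rw [secTanPowCoeff_succ]
    rcases k with _ | k
    · simp [ih (k := 1) (by omega)]
    · simp [ih (k := k) (by omega), ih (k := k + 2) (by omega)]

noncomputable def sechCoeff (n k : ℕ) : ℝ := (-1) ^ ((n + k) / 2) * secTanPowCoeff n k

lemma sechCoeff_eq_zero_of_lt {n k : ℕ} (h : n < k) : sechCoeff n k = 0 := by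
  rw [sechCoeff, secTanPowCoeff_eq_zero (.inl h), mul_zero]

lemma sechCoeff_succ (n k : ℕ) :
    sechCoeff (n + 1) k = (k + 1) * sechCoeff n (k + 1) - k * sechCoeff n (k - 1) := by
  rw [sechCoeff, sechCoeff, sechCoeff, secTanPowCoeff_succ]
  rcases k with _ | k
  · simp
  · rw [Nat.add_sub_cancel, show (n + 1 + (k + 1)) / 2 = (n + k) / 2 + 1 by omega,
      show (n + (k + 1 + 1)) / 2 = (n + k) / 2 + 1 by omega, pow_succ]
    push_cast
    ring

lemma sum_sechCoeff_mul_succ (n : ℕ) (g : ℕ → ℝ) :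
    ∑ k ∈ range (n + 1), sechCoeff n k * (k * g (k - 1) - (k + 1) * g (k + 1)) =
      ∑ j ∈ range (n + 2), sechCoeff (n + 1) j * g j := by
  simp_rw [sechCoeff_succ, sub_mul, mul_sub, sum_sub_distrib]
  congr 1
  · rw [sum_range_succ' (fun k => sechCoeff n k * (k * g (k - 1))), sum_range_succ _ (n + 1),
      sum_range_succ _ n, sechCoeff_eq_zero_of_lt (by omega : n < n + 1 + 1),
      sechCoeff_eq_zero_of_lt (by omega : n < n + 1)]
    simp only [Nat.add_sub_cancel]
    push_cast
    simp only [mul_zero, zero_mul, add_zero]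
    exact sum_congr rfl fun i _ => by ring
  · rw [sum_range_succ' (fun j => (j : ℝ) * sechCoeff n (j - 1) * g j)]
    simp only [Nat.add_sub_cancel]
    push_cast
    simp only [zero_mul, add_zero]
    exact sum_congr rfl fun i _ => by ring

lemma iteratedDeriv_one_div_cosh_eq_sum (n : ℕ) (x : ℝ) :
    iteratedDeriv n (fun t => 1 / cosh t) x =
      ∑ k ∈ range (n + 1), sechCoeff n k * (1 / cosh x * tanh x ^ k) := by
  induction n generalizing x with
  | zero => simp [sechCoeff, secTanPowCoeff_zero_left]
  | succ n ih =>
    rw [iteratedDeriv_succ, funext ih, ← sum_sechCoeff_mul_succ n fun j => 1 / cosh x * tanh x ^ j]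
    exact (HasDerivAt.fun_sum fun k _ =>
      (hasDerivAt_one_div_cosh_mul_tanh_pow k x).const_mul (sechCoeff n k)).deriv

theorem stmt19 (n : ℕ) (x : ℝ) :
    iteratedDeriv n (fun t : ℝ => 1 / Real.cosh t) x =
      (1 / Real.cosh x) *
        ∑ k ∈ (Finset.range (n + 1)).filter (fun k => n % 2 = k % 2),
          (-1 : ℝ) ^ ((n + k) / 2) * (k.factorial : ℝ) * S n k * Real.tanh x ^ k := by
  rw [iteratedDeriv_one_div_cosh_eq_sum, mul_sum, sum_filter]
  refine sum_congr rfl fun k _ => ?_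
  split_ifs with hparity
  · rw [sechCoeff, mul_assoc _ (k.factorial : ℝ), factorial_mul_S]
    ring
  · rw [sechCoeff, secTanPowCoeff_eq_zero (.inr hparity)]
    ring
end
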